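/- arXiv:2007.15204 — 4 statements merged into one kernel-verified Lean document; each statement's English description precedes it below -/
import Mathlib

section
/- Let T > 0, let a, b, c, f : (0,T) × (0,1) → ℝ with sup_{0<x<1, 0<t≤T} |f(t,x)| < +∞, and let u ∈ C⁰([0,T] × [0,1]) be such that u[t] ∈ C²((0,1)) for almost all t ∈ (0,T), ∂u/∂t exists and is continuous on (0,T) × [0,1], the derivatives ∂u/∂x(t,0) and ∂u/∂x(t,1) exist for all t ∈ (0,T], and ∂u/∂t = a·∂²u/∂x² + b·∂u/∂x + c·u + f for almost all t ∈ (0,T) and all x ∈ (0,1). Suppose a(t,x) ≥ 0 on (0,T)×(0,1) and there exist σ > 0 and η ∈ C²([0,1];(0,+∞)) with aη'' + bη' + (σ+c)η ≤ 0 on (0,T)×(0,1). Then for all ζ ∈ [0,σ), all functions g₀, g₁ : (0,T] → (0,+∞), k₀, k₁ : (0,T] → [1,+∞), and all t ∈ (0,T]: ‖u[t]‖_{∞,η} ≤ max( exp(−ζt)·‖u[0]‖_{∞,η}, sup_{0<s≤t} max( r₀(s), r₁(s), ‖f[s]‖_{∞,η}/(σ−ζ) )·exp(−ζ(t−s)) ),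 where r₀(t) := min( |u(t,0)|/η(0), (g₀(t)/η(0))·| ∂u/∂x(t,0) − (η'(0)/η(0) + k₀(t)/g₀(t))·u(t,0) | ) and r₁(t) := min( |u(t,1)|/η(1), (g₁(t)/η(1))·| ∂u/∂x(t,1) − (η'(1)/η(1) − k₁(t)/g₁(t))·u(t,1) | ). -/
/-!
Put `N s = ‖u[s]‖_{∞,η}`, `m s = e^{ζ s} N s`, and let `K` be `e^{ζ t}` times the right-hand side.
Since `∂u/∂t` is continuous, `N` is locally Lipschitz on `(0,T)`, so `m` is absolutely continuous
on compact subintervals of `(0,t)`, and `m t ≤ K` follows once `m' ≤ 0` almost everywhere on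
`{m > K}`. At such a time `s`, `N s` exceeds both boundary terms and `‖f[s]‖_{∞,η} / (σ - ζ)`.
Let `x₀` maximise `|u(s,·)| / η` and `e = ±1` with `e u(s,x₀) = |u(s,x₀)|`. If `x₀ = 0`, the
one-sided derivative of `e u(s,·) - N s η` at `0` is `≤ 0`, which makes the second boundary term
at `0` at least `N s`; likewise at `1`. So `x₀` is interior, where `e u(s,·) - N s η` has zero
first and nonpositive second derivative, and the equation together with the condition on `η`
gives `e ∂ₜu(s,x₀) ≤ -σ |u(s,x₀)| + |f(s,x₀)|`. Since `e u(·,x₀) / η x₀` touches `N` from below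
at `s`, this gives `m'(s) ≤ 0`.
-/

open Set MeasureTheory Filter
open scoped Topology NNReal Convex

theorem IsLocalMaxOn.hasDerivWithinAt_Icc_left_nonpos {g : ℝ → ℝ} {a b d : ℝ} (hab : a < b)
    (hmax : IsLocalMaxOn g (Icc a b) a) (hg : HasDerivWithinAt g d (Icc a b) a) : d ≤ 0 := by
  have hseg : [a -[ℝ] a + (b - a)] ⊆ Icc a b := by
    rw [add_sub_cancel, segment_eq_Icc hab.le]
  have := hmax.hasFDerivWithinAt_nonpos hg.hasFDerivWithinAt
    (mem_posTangentConeAt_of_segment_subset hseg)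
  simp only [ContinuousLinearMap.toSpanSingleton_apply, smul_eq_mul] at this
  exact nonpos_of_mul_nonpos_right this (sub_pos.2 hab)

theorem IsLocalMaxOn.hasDerivWithinAt_Icc_right_nonneg {g : ℝ → ℝ} {a b d : ℝ} (hab : a < b)
    (hmax : IsLocalMaxOn g (Icc a b) b) (hg : HasDerivWithinAt g d (Icc a b) b) : 0 ≤ d := by
  have hseg : [b -[ℝ] b + (a - b)] ⊆ Icc a b := by
    rw [add_sub_cancel, segment_symm, segment_eq_Icc hab.le]
  have := hmax.hasFDerivWithinAt_nonpos hg.hasFDerivWithinAt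
    (mem_posTangentConeAt_of_segment_subset hseg)
  simp only [ContinuousLinearMap.toSpanSingleton_apply, smul_eq_mul] at this
  nlinarith

theorem IsLocalMax.hasDerivAt_deriv_nonpos {f f' : ℝ → ℝ} {x₀ W : ℝ} (hmax : IsLocalMax f x₀)
    (hf : ∀ᶠ x in 𝓝 x₀, HasDerivAt f (f' x) x) (hf' : HasDerivAt f' W x₀) : W ≤ 0 := by
  -- If `W > 0`, the second-derivative test makes `x₀` a local minimum as well, so `f` is
  -- locally constant near `x₀` and `W = 0`.
  by_contra! hW
  have hderiv : deriv f =ᶠ[𝓝 x₀] f' := hf.mono fun x hx => hx.deriv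
  have hmin : IsLocalMin f x₀ :=
    isLocalMin_of_deriv_deriv_pos (by rwa [hderiv.deriv_eq, hf'.deriv])
      (hderiv.eq_of_nhds.trans (hmax.hasDerivAt_eq_zero hf.self_of_nhds))
      hf.self_of_nhds.continuousAt
  have hconst : ∀ᶠ x in 𝓝 x₀, f =ᶠ[𝓝 x] fun _ => f x₀ :=
    ((hmin.and hmax).mono fun x hx => le_antisymm hx.2 hx.1).eventually_nhds
  have hzero : f' =ᶠ[𝓝 x₀] fun _ => 0 := by
    filter_upwards [hconst, hf] with x hx hfx
    exact hfx.unique ((hasDerivAt_const x (f x₀)).congr_of_eventuallyEq hx)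
  exact hW.ne' (hf'.unique ((hasDerivAt_const x₀ (0 : ℝ)).congr_of_eventuallyEq hzero))

theorem deriv_eq_of_eventually_le_of_eq {f g : ℝ → ℝ} {f' x : ℝ} (hf : HasDerivAt f f' x)
    (hg : DifferentiableAt ℝ g x) (hle : ∀ᶠ y in 𝓝 x, f y ≤ g y) (heq : f x = g x) :
    deriv g x = f' := by
  have hmin : IsLocalMin (fun y => g y - f y) x :=
    hle.mono fun y hy => by simpa [heq] using hy
  linarith [hmin.hasDerivAt_eq_zero (hg.hasDerivAt.sub hf)]

theorem AbsolutelyContinuousOnInterval.le_of_ae_deriv_nonpos {m : ℝ → ℝ} {α β : ℝ}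
    (hm : AbsolutelyContinuousOnInterval m α β) (hαβ : α ≤ β)
    (hderiv : ∀ᵐ s, s ∈ Ioo α β → deriv m s ≤ 0) : m β ≤ m α := by
  rw [← sub_nonpos, ← hm.integral_deriv_eq_sub, intervalIntegral.integral_of_le hαβ,
    integral_Ioc_eq_integral_Ioo]
  exact integral_nonpos_of_ae ((ae_restrict_iff' measurableSet_Ioo).2 hderiv)

theorem image_le_of_ae_deriv_nonpos_above {m : ℝ → ℝ} {a b K : ℝ} (hab : a ≤ b)
    (hcont : ContinuousOn m (Icc a b))
    (hac : ∀ α β, a < α → α ≤ β → β < b → AbsolutelyContinuousOnInterval m α β)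
    (hderiv : ∀ᵐ s, s ∈ Ioo a b → K < m s → deriv m s ≤ 0) (ha : m a ≤ K) : m b ≤ K := by
  by_contra! hb
  set S := Icc a b ∩ m ⁻¹' Iic K
  have hS : IsClosed S := hcont.preimage_isClosed_of_isClosed isClosed_Icc isClosed_Iic
  have hSbdd : BddAbove S := ⟨b, fun s hs => hs.1.2⟩
  -- the last time at which `m` is below `K`
  set s₀ := sSup S
  have hs₀ : s₀ ∈ S := hS.csSup_mem ⟨a, ⟨le_rfl, hab⟩, ha⟩ hSbdd
  have hs₀b : s₀ < b := hs₀.1.2.lt_of_ne fun h => (hb.trans_le (h ▸ hs₀.2)).false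
  have habove : ∀ s ∈ Ioc s₀ b, K < m s := fun s hs => by
    by_contra! h
    exact (le_csSup hSbdd ⟨⟨hs₀.1.1.trans hs.1.le, hs.2⟩, h⟩).not_gt hs.1
  obtain ⟨β, hβ⟩ := nonempty_Ioo.2 hs₀b
  have hmono : ∀ α ∈ Ioo s₀ β, m β ≤ m α := fun α hα =>
    (hac α β (hs₀.1.1.trans_lt hα.1) hα.2.le hβ.2).le_of_ae_deriv_nonpos hα.2.le <| by
      filter_upwards [hderiv] with s hs hsαβ
      exact hs ⟨hs₀.1.1.trans_lt (hα.1.trans hsαβ.1), hsαβ.2.trans hβ.2⟩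
        (habove s ⟨hα.1.trans hsαβ.1, (hsαβ.2.trans hβ.2).le⟩)
  have hlim : Tendsto m (𝓝[Ioo s₀ β] s₀) (𝓝 (m s₀)) :=
    (hcont s₀ hs₀.1).mono fun s hs => ⟨hs₀.1.1.trans hs.1.le, (hs.2.trans hβ.2).le⟩
  have := left_nhdsWithin_Ioo_neBot hβ.1
  have : m β ≤ m s₀ := ge_of_tendsto hlim (eventually_nhdsWithin_of_forall hmono)
  exact (habove β ⟨hβ.1, hβ.2.le⟩).not_ge (this.trans hs₀.2)

theorem IsCompact.continuousOn_sSup_image {α β γ : Type*} [ConditionallyCompleteLinearOrder α]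
    [TopologicalSpace α] [OrderTopology α] [TopologicalSpace β] [TopologicalSpace γ]
    {F : γ → β → α} {I : Set γ} {S : Set β} (hS : IsCompact S)
    (hF : ContinuousOn (fun p : γ × β => F p.1 p.2) (I ×ˢ S)) :
    ContinuousOn (fun s => sSup (F s '' S)) I := by
  have : CompactSpace S := isCompact_iff_compactSpace.1 hS
  have hF' : Continuous fun p : I × S => F p.1 p.2 :=
    hF.comp_continuous (continuous_subtype_val.prodMap continuous_subtype_val)
      fun p => ⟨p.1.2, p.2.2⟩
  rw [continuousOn_iff_continuous_domRestrict]
  convert isCompact_univ.continuous_sSup (f := fun (s : I) (x : S) => F s x) hF' using 2 with s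
  rw [image_univ, ← image_eq_range]
  rfl

theorem LipschitzOnWith.sSup_image {α β : Type*} [PseudoMetricSpace α] {F : α → β → ℝ}
    {I : Set α} {S : Set β} {K : ℝ≥0} (hS : S.Nonempty) (hbdd : ∀ s ∈ I, BddAbove (F s '' S))
    (hF : ∀ x ∈ S, LipschitzOnWith K (F · x) I) :
    LipschitzOnWith K (fun s => sSup (F s '' S)) I :=
  LipschitzOnWith.of_le_add_mul K fun _ hs₁ s₂ hs₂ =>
    csSup_le (hS.image _) <| forall_mem_image.2 fun x hx =>
      ((hF x hx).le_add_mul hs₁ hs₂).trans <|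
        add_le_add_left (le_csSup (hbdd s₂ hs₂) (mem_image_of_mem _ hx)) _

/-- The weighted sup norm `‖v‖_{∞,η}` of the paper, taken over `S`. -/
noncomputable def weightedSup (η v : ℝ → ℝ) (S : Set ℝ) : ℝ :=
  sSup ((fun x => |v x| / η x) '' S)

section weightedSup

variable {η v : ℝ → ℝ} {S : Set ℝ}

theorem weightedSup_nonneg (hη : ∀ x ∈ S, 0 < η x) : 0 ≤ weightedSup η v S :=
  Real.sSup_nonneg <| forall_mem_image.2 fun x hx => div_nonneg (abs_nonneg _) (hη x hx).le

theorem abs_div_le_div_of_abs_le {M ηmin : ℝ} (hηmin : 0 < ηmin) (hη : ∀ x ∈ S, ηmin ≤ η x)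
    (hv : ∀ x ∈ S, |v x| ≤ M) {x : ℝ} (hx : x ∈ S) : |v x| / η x ≤ M / ηmin :=
  div_le_div₀ ((abs_nonneg _).trans (hv x hx)) (hv x hx) hηmin (hη x hx)

theorem bddAbove_abs_div_of_abs_le {M ηmin : ℝ} (hηmin : 0 < ηmin) (hη : ∀ x ∈ S, ηmin ≤ η x)
    (hv : ∀ x ∈ S, |v x| ≤ M) : BddAbove ((fun x => |v x| / η x) '' S) :=
  ⟨M / ηmin, forall_mem_image.2 fun _ hx => abs_div_le_div_of_abs_le hηmin hη hv hx⟩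

theorem weightedSup_le_of_abs_le {M ηmin : ℝ} (hS : S.Nonempty) (hηmin : 0 < ηmin)
    (hη : ∀ x ∈ S, ηmin ≤ η x) (hv : ∀ x ∈ S, |v x| ≤ M) : weightedSup η v S ≤ M / ηmin :=
  csSup_le (hS.image _) <| forall_mem_image.2 fun _ hx => abs_div_le_div_of_abs_le hηmin hη hv hx

theorem abs_div_le_weightedSup_of_continuousOn (hS : IsCompact S) (hv : ContinuousOn v S)
    (hη : ContinuousOn η S) (hη0 : ∀ x ∈ S, η x ≠ 0) {x : ℝ} (hx : x ∈ S) :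
    |v x| / η x ≤ weightedSup η v S :=
  le_csSup (hS.bddAbove_image (hv.abs.div hη hη0)) (mem_image_of_mem _ hx)

theorem exists_weightedSup_eq (hS : IsCompact S) (hSne : S.Nonempty) (hv : ContinuousOn v S)
    (hη : ContinuousOn η S) (hη0 : ∀ x ∈ S, η x ≠ 0) :
    ∃ x₀ ∈ S, weightedSup η v S = |v x₀| / η x₀ :=
  hS.exists_sSup_image_eq hSne (hv.abs.div hη hη0)

theorem continuousOn_weightedSup {u : ℝ → ℝ → ℝ} {I : Set ℝ} (hS : IsCompact S)
    (hu : ContinuousOn (fun p : ℝ × ℝ => u p.1 p.2) (I ×ˢ S)) (hη : ContinuousOn η S)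
    (hη0 : ∀ x ∈ S, η x ≠ 0) : ContinuousOn (fun s => weightedSup η (u s) S) I :=
  hS.continuousOn_sSup_image <|
    hu.abs.div (hη.comp continuousOn_snd fun _ hp => hp.2) fun _ hp => hη0 _ hp.2

theorem exists_lipschitzOnWith_weightedSup {u ut : ℝ → ℝ → ℝ} {I : Set ℝ} (hI : IsCompact I)
    (hIc : Convex ℝ I) (hS : IsCompact S) (hSne : S.Nonempty)
    (hu : ContinuousOn (fun p : ℝ × ℝ => u p.1 p.2) (I ×ˢ S))
    (hut : ∀ s ∈ I, ∀ x ∈ S, HasDerivWithinAt (fun τ => u τ x) (ut s x) I s)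
    (hut_cont : ContinuousOn (fun p : ℝ × ℝ => ut p.1 p.2) (I ×ˢ S))
    (hη : ContinuousOn η S) (hη_pos : ∀ x ∈ S, 0 < η x) :
    ∃ K, LipschitzOnWith K (fun s => weightedSup η (u s) S) I := by
  obtain ⟨L, hL⟩ := (hI.prod hS).exists_bound_of_continuousOn hut_cont
  obtain ⟨x₁, hx₁, hmin⟩ := hS.exists_isMinOn hSne hη
  refine ⟨_, LipschitzOnWith.sSup_image hSne (fun s hs => hS.bddAbove_image
    ((hu.uncurry_left s hs).abs.div hη fun x hx => (hη_pos x hx).ne'))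
    fun x hx => LipschitzOnWith.of_dist_le' (K := L / η x₁) fun s₁ hs₁ s₂ hs₂ => ?_⟩
  have hmvt : |u s₁ x - u s₂ x| ≤ L * |s₁ - s₂| := by
    simpa only [Real.norm_eq_abs] using Convex.norm_image_sub_le_of_norm_hasDerivWithin_le
      (f := fun τ => u τ x) (fun τ hτ => hut τ hτ x hx) (fun τ hτ => hL (τ, x) ⟨hτ, hx⟩) hIc hs₂ hs₁
  calc dist (|u s₁ x| / η x) (|u s₂ x| / η x) = |(|u s₁ x| - |u s₂ x|)| / η x := by
        rw [Real.dist_eq, ← sub_div, abs_div, abs_of_pos (hη_pos x hx)]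
    _ ≤ L * |s₁ - s₂| / η x₁ :=
        div_le_div₀ ((abs_nonneg _).trans hmvt) ((abs_abs_sub_abs_le _ _).trans hmvt)
          (hη_pos x₁ hx₁) (hmin hx)
    _ = L / η x₁ * dist s₁ s₂ := by rw [Real.dist_eq]; ring

end weightedSup

/-- The quantity `max (r₀, r₁, ‖f‖_{∞,η} / (σ - ζ))` of the paper at a single time, where `v`, `vx`
and `F` are the profiles of `u`, `∂u/∂x` and `f` at that time. -/
noncomputable def forcingTerm (v vx F η η' : ℝ → ℝ) (g₀ g₁ k₀ k₁ σ ζ : ℝ) : ℝ :=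
  max (max (min (|v 0| / η 0) (g₀ / η 0 * |vx 0 - (η' 0 / η 0 + k₀ / g₀) * v 0|))
      (min (|v 1| / η 1) (g₁ / η 1 * |vx 1 - (η' 1 / η 1 - k₁ / g₁) * v 1|)))
    (weightedSup η F (Ioo 0 1) / (σ - ζ))

section forcingTerm

variable {v vx F η η' : ℝ → ℝ} {g₀ g₁ k₀ k₁ σ ζ : ℝ}

theorem forcingTerm_nonneg (hη : ∀ x ∈ Ioo (0:ℝ) 1, 0 < η x) (hζσ : ζ < σ) :
    0 ≤ forcingTerm v vx F η η' g₀ g₁ k₀ k₁ σ ζ :=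
  (div_nonneg (weightedSup_nonneg hη) (sub_pos.2 hζσ).le).trans (le_max_right _ _)

theorem forcingTerm_le {C M ηmin : ℝ} (hζσ : ζ < σ) (hηmin : 0 < ηmin)
    (hη : ∀ x ∈ Icc (0:ℝ) 1, ηmin ≤ η x) (hv₀ : |v 0| ≤ C) (hv₁ : |v 1| ≤ C)
    (hF : ∀ x ∈ Ioo (0:ℝ) 1, |F x| ≤ M) :
    forcingTerm v vx F η η' g₀ g₁ k₀ k₁ σ ζ ≤ max (C / ηmin) (M / ηmin / (σ - ζ)) := by
  have hC : 0 ≤ C := (abs_nonneg _).trans hv₀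
  refine max_le_max (max_le ?_ ?_) (div_le_div_of_nonneg_right ?_ (sub_pos.2 hζσ).le)
  · exact (min_le_left _ _).trans (div_le_div₀ hC hv₀ hηmin (hη 0 (by simp)))
  · exact (min_le_left _ _).trans (div_le_div₀ hC hv₁ hηmin (hη 1 (by simp)))
  · exact weightedSup_le_of_abs_le (nonempty_Ioo.2 zero_lt_one) hηmin
      (fun x hx => hη x (Ioo_subset_Icc_self hx)) hF

end forcingTerm

theorem exists_mul_eq_abs (x : ℝ) : ∃ e : ℝ, e * x = |x| ∧ ∀ z, |e * z| = |z| := by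
  rcases abs_cases x with ⟨h, _⟩ | ⟨h, _⟩
  · exact ⟨1, by rw [h, one_mul], fun z => by rw [one_mul]⟩
  · exact ⟨-1, by rw [h, neg_one_mul], fun z => by rw [neg_one_mul, abs_neg]⟩

theorem le_min_boundary_left {v η : ℝ → ℝ} {a b d η'a N g k : ℝ} (hab : a < b)
    (hv : HasDerivWithinAt v d (Icc a b) a) (hη : HasDerivWithinAt η η'a (Icc a b) a)
    (hle : ∀ x ∈ Icc a b, |v x| ≤ N * η x) (heq : |v a| = N * η a)
    (hηa : 0 < η a) (hg : 0 < g) (hk : 1 ≤ k) (hN : 0 ≤ N) :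
    N ≤ min (|v a| / η a) (g / η a * |d - (η'a / η a + k / g) * v a|) := by
  obtain ⟨e, hev, he⟩ := exists_mul_eq_abs (v a)
  have hmax : IsMaxOn (fun x => e * v x - N * η x) (Icc a b) a := fun x hx => by
    show e * v x - N * η x ≤ e * v a - N * η a
    linarith [le_abs_self (e * v x), he (v x), hle x hx]
  have hd : e * d - N * η'a ≤ 0 :=
    hmax.localize.hasDerivWithinAt_Icc_left_nonpos hab ((hv.const_mul e).sub (hη.const_mul N))
  have hrw : e * (d - (η'a / η a + k / g) * v a) = e * d - N * η'a - k / g * (N * η a) := by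
    calc _ = e * d - (η'a / η a + k / g) * (e * v a) := by ring
      _ = _ := by rw [hev, heq]; field_simp; ring
  have hbd : k / g * (N * η a) ≤ |d - (η'a / η a + k / g) * v a| := by
    linarith [neg_le_abs (e * (d - (η'a / η a + k / g) * v a)), he (d - (η'a / η a + k / g) * v a)]
  refine le_min (by rw [heq, mul_div_cancel_right₀ _ hηa.ne']) ?_
  calc N ≤ k * N := le_mul_of_one_le_left hN hk
    _ = g / η a * (k / g * (N * η a)) := by field_simp
    _ ≤ _ := by gcongr

theorem le_min_boundary_right {v η : ℝ → ℝ} {a b d η'b N g k : ℝ} (hab : a < b)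
    (hv : HasDerivWithinAt v d (Icc a b) b) (hη : HasDerivWithinAt η η'b (Icc a b) b)
    (hle : ∀ x ∈ Icc a b, |v x| ≤ N * η x) (heq : |v b| = N * η b)
    (hηb : 0 < η b) (hg : 0 < g) (hk : 1 ≤ k) (hN : 0 ≤ N) :
    N ≤ min (|v b| / η b) (g / η b * |d - (η'b / η b - k / g) * v b|) := by
  obtain ⟨e, hev, he⟩ := exists_mul_eq_abs (v b)
  have hmax : IsMaxOn (fun x => e * v x - N * η x) (Icc a b) b := fun x hx => by
    show e * v x - N * η x ≤ e * v b - N * η b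
    linarith [le_abs_self (e * v x), he (v x), hle x hx]
  have hd : 0 ≤ e * d - N * η'b :=
    hmax.localize.hasDerivWithinAt_Icc_right_nonneg hab ((hv.const_mul e).sub (hη.const_mul N))
  have hrw : e * (d - (η'b / η b - k / g) * v b) = e * d - N * η'b + k / g * (N * η b) := by
    calc _ = e * d - (η'b / η b - k / g) * (e * v b) := by ring
      _ = _ := by rw [hev, heq]; field_simp; ring
  have hbd : k / g * (N * η b) ≤ |d - (η'b / η b - k / g) * v b| := by
    linarith [le_abs_self (e * (d - (η'b / η b - k / g) * v b)), he (d - (η'b / η b - k / g) * v b)]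
  refine le_min (by rw [heq, mul_div_cancel_right₀ _ hηb.ne']) ?_
  calc N ≤ k * N := le_mul_of_one_le_left hN hk
    _ = g / η b * (k / g * (N * η b)) := by field_simp
    _ ≤ _ := by gcongr

theorem elliptic_le_of_eventually_le {w w' η η' : ℝ → ℝ} {x₀ W η''₀ N A B C : ℝ}
    (hw : ∀ᶠ x in 𝓝 x₀, HasDerivAt w (w' x) x) (hw' : HasDerivAt w' W x₀)
    (hη : ∀ᶠ x in 𝓝 x₀, HasDerivAt η (η' x) x) (hη' : HasDerivAt η' η''₀ x₀)
    (hle : ∀ᶠ x in 𝓝 x₀, w x ≤ N * η x) (heq : w x₀ = N * η x₀) (hA : 0 ≤ A) :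
    A * W + B * w' x₀ + C * w x₀ ≤ N * (A * η''₀ + B * η' x₀ + C * η x₀) := by
  have hmax : IsLocalMax (fun x => w x - N * η x) x₀ :=
    hle.mono fun x hx => by simp only [heq, sub_self, sub_nonpos, hx]
  have hd : ∀ᶠ x in 𝓝 x₀, HasDerivAt (fun x => w x - N * η x) (w' x - N * η' x) x :=
    (hw.and hη).mono fun x h => h.1.sub (h.2.const_mul N)
  have h1 : w' x₀ = N * η' x₀ := sub_eq_zero.1 (hmax.hasDerivAt_eq_zero hd.self_of_nhds)
  have h2 : W ≤ N * η''₀ :=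
    sub_nonpos.1 (hmax.hasDerivAt_deriv_nonpos hd (hw'.sub (hη'.const_mul N)))
  rw [h1, heq]
  nlinarith [mul_le_mul_of_nonneg_left h2 hA]

theorem deriv_mul_exp_nonpos_of_eventually_le {N V : ℝ → ℝ} {V' ζ s : ℝ}
    (hV : HasDerivAt V V' s) (hle : ∀ᶠ τ in 𝓝 s, V τ ≤ N τ) (heq : V s = N s)
    (hV' : V' + ζ * N s ≤ 0) : deriv (fun τ => N τ * Real.exp (ζ * τ)) s ≤ 0 := by
  by_cases hd : DifferentiableAt ℝ (fun τ => N τ * Real.exp (ζ * τ)) s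
  · have hexp := ((hasDerivAt_id' s).const_mul ζ).exp
    rw [deriv_eq_of_eventually_le_of_eq (hV.fun_mul hexp) hd
      (hle.mono fun τ hτ => mul_le_mul_of_nonneg_right hτ (Real.exp_pos _).le) (by rw [heq]), heq]
    nlinarith [Real.exp_pos (ζ * s)]
  · rw [deriv_zero_of_not_differentiableAt hd]

theorem mem_Ioo_of_boundary_lt {v vx η η' : ℝ → ℝ} {N g₀ g₁ k₀ k₁ x₀ : ℝ}
    (hv₀ : HasDerivWithinAt v (vx 0) (Icc 0 1) 0) (hv₁ : HasDerivWithinAt v (vx 1) (Icc 0 1) 1)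
    (hη₀ : HasDerivWithinAt η (η' 0) (Icc 0 1) 0) (hη₁ : HasDerivWithinAt η (η' 1) (Icc 0 1) 1)
    (hη_pos : ∀ x ∈ Icc (0:ℝ) 1, 0 < η x) (hle : ∀ x ∈ Icc (0:ℝ) 1, |v x| ≤ N * η x)
    (hx₀ : x₀ ∈ Icc (0:ℝ) 1) (heq : |v x₀| = N * η x₀) (hN : 0 ≤ N)
    (hg₀ : 0 < g₀) (hg₁ : 0 < g₁) (hk₀ : 1 ≤ k₀) (hk₁ : 1 ≤ k₁)
    (hr₀ : min (|v 0| / η 0) (g₀ / η 0 * |vx 0 - (η' 0 / η 0 + k₀ / g₀) * v 0|) < N)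
    (hr₁ : min (|v 1| / η 1) (g₁ / η 1 * |vx 1 - (η' 1 / η 1 - k₁ / g₁) * v 1|) < N) :
    x₀ ∈ Ioo (0:ℝ) 1 := by
  refine ⟨hx₀.1.lt_of_ne ?_, hx₀.2.lt_of_ne ?_⟩
  · rintro rfl
    exact hr₀.not_ge (le_min_boundary_left zero_lt_one hv₀ hη₀ hle heq (hη_pos 0 hx₀) hg₀ hk₀ hN)
  · rintro rfl
    exact hr₁.not_ge (le_min_boundary_right zero_lt_one hv₁ hη₁ hle heq (hη_pos 1 hx₀) hg₁ hk₁ hN)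

theorem exists_mul_elliptic_le {v vx η η' : ℝ → ℝ} {x₀ vxx₀ η''₀ N A B C F σ : ℝ}
    (hv : ∀ᶠ x in 𝓝 x₀, HasDerivAt v (vx x) x) (hvx : HasDerivAt vx vxx₀ x₀)
    (hη : ∀ᶠ x in 𝓝 x₀, HasDerivAt η (η' x) x) (hη' : HasDerivAt η' η''₀ x₀)
    (hle : ∀ᶠ x in 𝓝 x₀, |v x| ≤ N * η x) (heq : |v x₀| = N * η x₀) (hN : 0 ≤ N) (hA : 0 ≤ A)
    (hcond : A * η''₀ + B * η' x₀ + (σ + C) * η x₀ ≤ 0) :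
    ∃ e : ℝ, e * v x₀ = |v x₀| ∧ (∀ z, |e * z| = |z|) ∧
      e * (A * vxx₀ + B * vx x₀ + C * v x₀ + F) ≤ -σ * (N * η x₀) + |F| := by
  obtain ⟨e, hev, he⟩ := exists_mul_eq_abs (v x₀)
  have hell := elliptic_le_of_eventually_le (w := fun x => e * v x) (A := A) (B := B) (C := C)
    (hv.mono fun x hx => hx.const_mul e) (hvx.const_mul e) hη hη'
    (hle.mono fun x hx => show e * v x ≤ N * η x by linarith [le_abs_self (e * v x), he (v x)])
    (hev.trans heq) hA
  refine ⟨e, hev, he, ?_⟩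
  nlinarith [mul_le_mul_of_nonneg_left hcond hN, le_abs_self (e * F), he F]

theorem deriv_weightedSup_mul_exp_nonpos {u : ℝ → ℝ → ℝ} {ut ux uxx a b c f η η' η'' : ℝ → ℝ}
    {σ ζ s g₀ g₁ k₀ k₁ : ℝ}
    (hu : ∀ᶠ τ in 𝓝 s, ContinuousOn (u τ) (Icc 0 1))
    (hut : ∀ x ∈ Icc (0:ℝ) 1, HasDerivAt (fun τ => u τ x) (ut x) s)
    (hux₀ : HasDerivWithinAt (u s) (ux 0) (Icc 0 1) 0)
    (hux₁ : HasDerivWithinAt (u s) (ux 1) (Icc 0 1) 1)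
    (hux : ∀ x ∈ Ioo (0:ℝ) 1, HasDerivAt (u s) (ux x) x)
    (huxx : ∀ x ∈ Ioo (0:ℝ) 1, HasDerivAt ux (uxx x) x)
    (hpde : ∀ x ∈ Ioo (0:ℝ) 1, ut x = a x * uxx x + b x * ux x + c x * u s x + f x)
    (ha : ∀ x ∈ Ioo (0:ℝ) 1, 0 ≤ a x)
    (hcond : ∀ x ∈ Ioo (0:ℝ) 1, a x * η'' x + b x * η' x + (σ + c x) * η x ≤ 0)
    (hη_pos : ∀ x ∈ Icc (0:ℝ) 1, 0 < η x)
    (hη1 : ∀ x ∈ Icc (0:ℝ) 1, HasDerivWithinAt η (η' x) (Icc 0 1) x)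
    (hη2 : ∀ x ∈ Icc (0:ℝ) 1, HasDerivWithinAt η' (η'' x) (Icc 0 1) x)
    (hg₀ : 0 < g₀) (hg₁ : 0 < g₁) (hk₀ : 1 ≤ k₀) (hk₁ : 1 ≤ k₁)
    (hζσ : ζ < σ) (hf : BddAbove ((fun x => |f x| / η x) '' Ioo 0 1))
    (hN : forcingTerm (u s) ux f η η' g₀ g₁ k₀ k₁ σ ζ < weightedSup η (u s) (Icc 0 1)) :
    deriv (fun τ => weightedSup η (u τ) (Icc 0 1) * Real.exp (ζ * τ)) s ≤ 0 := by
  set N := fun τ => weightedSup η (u τ) (Icc 0 1)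
  have hr₀ := ((le_max_left _ _).trans (le_max_left _ _)).trans_lt hN
  have hr₁ := ((le_max_right _ _).trans (le_max_left _ _)).trans_lt hN
  have hf₀ : ∀ x ∈ Ioo (0:ℝ) 1, |f x| / η x ≤ (σ - ζ) * N s := fun x hx =>
    (le_csSup hf (mem_image_of_mem _ hx)).trans
      ((div_le_iff₀' (sub_pos.2 hζσ)).1 ((le_max_right _ _).trans hN.le))
  have hηc : ContinuousOn η (Icc 0 1) := fun x hx => (hη1 x hx).continuousWithinAt
  have hη0 : ∀ x ∈ Icc (0:ℝ) 1, η x ≠ 0 := fun x hx => (hη_pos x hx).ne'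
  have hle : ∀ᶠ τ in 𝓝 s, ∀ x ∈ Icc (0:ℝ) 1, |u τ x| / η x ≤ N τ := hu.mono fun τ hτ x hx =>
    abs_div_le_weightedSup_of_continuousOn isCompact_Icc hτ hηc hη0 hx
  obtain ⟨x₀, hx₀, hNx₀⟩ : ∃ x₀ ∈ Icc (0:ℝ) 1, N s = |u s x₀| / η x₀ :=
    exists_weightedSup_eq isCompact_Icc (nonempty_Icc.2 zero_le_one) hu.self_of_nhds hηc hη0
  have hN₀ : 0 ≤ N s := weightedSup_nonneg hη_pos
  have habs : ∀ x ∈ Icc (0:ℝ) 1, |u s x| ≤ N s * η x := fun x hx =>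
    (div_le_iff₀ (hη_pos x hx)).1 (hle.self_of_nhds x hx)
  have heq : |u s x₀| = N s * η x₀ := by rw [hNx₀, div_mul_cancel₀ _ (hη0 x₀ hx₀)]
  have hx₀' := mem_Ioo_of_boundary_lt hux₀ hux₁ (hη1 0 (by simp)) (hη1 1 (by simp)) hη_pos habs
    hx₀ heq hN₀ hg₀ hg₁ hk₀ hk₁ hr₀ hr₁
  have hnhds : Ioo (0:ℝ) 1 ∈ 𝓝 x₀ := Ioo_mem_nhds hx₀'.1 hx₀'.2
  obtain ⟨e, hev, he, hpde_le⟩ := exists_mul_elliptic_le (F := f x₀)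
    (mem_of_superset hnhds hux) (huxx x₀ hx₀')
    (mem_of_superset hnhds fun x hx => (hη1 x (Ioo_subset_Icc_self hx)).hasDerivAt
      (Icc_mem_nhds hx.1 hx.2))
    ((hη2 x₀ hx₀).hasDerivAt (Icc_mem_nhds hx₀'.1 hx₀'.2))
    (mem_of_superset hnhds fun x hx => habs x (Ioo_subset_Icc_self hx)) heq hN₀ (ha x₀ hx₀')
    (hcond x₀ hx₀')
  rw [← hpde x₀ hx₀'] at hpde_le
  have hut_le : e * ut x₀ / η x₀ ≤ -ζ * N s := by
    rw [div_le_iff₀ (hη_pos x₀ hx₀)]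
    nlinarith [(div_le_iff₀ (hη_pos x₀ hx₀)).1 (hf₀ x₀ hx₀')]
  refine deriv_mul_exp_nonpos_of_eventually_le (V := fun τ => e * u τ x₀ / η x₀)
    (((hut x₀ hx₀).const_mul e).div_const _) (hle.mono fun τ hτ => ?_)
    (by rw [hev]; exact hNx₀.symm) (by linarith)
  exact (div_le_div_of_nonneg_right (by linarith [le_abs_self (e * u τ x₀), he (u τ x₀)])
    (hη_pos x₀ hx₀).le).trans (hτ x₀ hx₀)

theorem absolutelyContinuousOnInterval_weightedSup_mul_exp {u ut : ℝ → ℝ → ℝ} {η : ℝ → ℝ}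
    {T α β ζ : ℝ} (hα : 0 < α) (hαβ : α ≤ β) (hβ : β < T)
    (hu : ContinuousOn (fun p : ℝ × ℝ => u p.1 p.2) (Icc 0 T ×ˢ Icc 0 1))
    (hut : ∀ t ∈ Ioo 0 T, ∀ x ∈ Icc (0:ℝ) 1, HasDerivAt (fun τ => u τ x) (ut t x) t)
    (hut_cont : ContinuousOn (fun p : ℝ × ℝ => ut p.1 p.2) (Ioo 0 T ×ˢ Icc 0 1))
    (hη : ContinuousOn η (Icc 0 1)) (hη_pos : ∀ x ∈ Icc (0:ℝ) 1, 0 < η x) :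
    AbsolutelyContinuousOnInterval
      (fun s => weightedSup η (u s) (Icc 0 1) * Real.exp (ζ * s)) α β := by
  have hsub : Icc α β ⊆ Ioo 0 T := fun s hs => ⟨hα.trans_le hs.1, hs.2.trans_lt hβ⟩
  obtain ⟨K, hK⟩ := exists_lipschitzOnWith_weightedSup isCompact_Icc (convex_Icc α β)
    isCompact_Icc (nonempty_Icc.2 zero_le_one)
    (hu.mono (prod_mono (hsub.trans Ioo_subset_Icc_self) le_rfl))
    (fun s hs x hx => (hut s (hsub hs) x hx).hasDerivWithinAt)
    (hut_cont.mono (prod_mono hsub le_rfl)) hη hη_pos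
  rw [← uIcc_of_le hαβ] at hK
  exact hK.absolutelyContinuousOnInterval.fun_mul
    (by fun_prop : ContDiff ℝ 1 fun s => Real.exp (ζ * s)).contDiffOn.absolutelyContinuousOnInterval

theorem mul_exp_le_sSup_image {G : ℝ → ℝ} {I : Set ℝ} {ζ t C s : ℝ} (hζ : 0 ≤ ζ)
    (hI : ∀ r ∈ I, r ≤ t) (hG0 : ∀ r ∈ I, 0 ≤ G r) (hGC : ∀ r ∈ I, G r ≤ C) (hs : s ∈ I) :
    G s * Real.exp (ζ * s) ≤
      sSup ((fun r => G r * Real.exp (-ζ * (t - r))) '' I) * Real.exp (ζ * t) := by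
  have hbdd : BddAbove ((fun r => G r * Real.exp (-ζ * (t - r))) '' I) :=
    ⟨C, forall_mem_image.2 fun r hr => (mul_le_of_le_one_right (hG0 r hr)
      (Real.exp_le_one_iff.2 (by nlinarith [hI r hr]))).trans (hGC r hr)⟩
  calc G s * Real.exp (ζ * s) = G s * Real.exp (-ζ * (t - s)) * Real.exp (ζ * t) := by
        rw [mul_assoc, ← Real.exp_add]; ring_nf
    _ ≤ _ := by gcongr; exact le_csSup hbdd (mem_image_of_mem _ hs)

theorem le_max_of_mul_exp_le_max {x y Q ζ t : ℝ}
    (h : x * Real.exp (ζ * t) ≤ max y (Q * Real.exp (ζ * t))) :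
    x ≤ max (Real.exp (-ζ * t) * y) Q := by
  have hE : Real.exp (ζ * t) * Real.exp (-ζ * t) = 1 := by rw [← Real.exp_add]; simp
  calc x = x * Real.exp (ζ * t) * Real.exp (-ζ * t) := by rw [mul_assoc, hE, mul_one]
    _ ≤ max y (Q * Real.exp (ζ * t)) * Real.exp (-ζ * t) := by gcongr
    _ = max (Real.exp (-ζ * t) * y) Q := by
      rw [max_mul_of_nonneg _ _ (Real.exp_pos _).le, mul_assoc, hE, mul_one, mul_comm]

theorem thm2_2_general
    (T : ℝ)
    (a b c f : ℝ → ℝ → ℝ)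
    (hf_bdd : ∃ M : ℝ, ∀ t ∈ Set.Ioc (0:ℝ) T, ∀ x ∈ Set.Ioo (0:ℝ) 1, |f t x| ≤ M)
    (u ut ux uxx : ℝ → ℝ → ℝ)
    (hu_cont : ContinuousOn (fun p : ℝ × ℝ => u p.1 p.2) (Set.Icc 0 T ×ˢ Set.Icc 0 1))
    (hut : ∀ t ∈ Set.Ioo (0:ℝ) T, ∀ x ∈ Set.Icc (0:ℝ) 1,
      HasDerivAt (fun τ => u τ x) (ut t x) t)
    (hut_cont : ContinuousOn (fun p : ℝ × ℝ => ut p.1 p.2) (Set.Ioo 0 T ×ˢ Set.Icc 0 1))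
    (hux_bd : ∀ t ∈ Set.Ioc (0:ℝ) T,
      HasDerivWithinAt (u t) (ux t 0) (Set.Icc 0 1) 0 ∧
      HasDerivWithinAt (u t) (ux t 1) (Set.Icc 0 1) 1)
    (hC2_pde : ∀ᵐ t ∂(volume.restrict (Set.Ioo 0 T)),
      (∀ x ∈ Set.Ioo (0:ℝ) 1, HasDerivAt (u t) (ux t x) x) ∧
      (∀ x ∈ Set.Ioo (0:ℝ) 1, HasDerivAt (ux t) (uxx t x) x) ∧
      ContinuousOn (uxx t) (Set.Ioo 0 1) ∧
      (∀ x ∈ Set.Ioo (0:ℝ) 1,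
        ut t x = a t x * uxx t x + b t x * ux t x + c t x * u t x + f t x))
    (ha : ∀ t ∈ Set.Ioo (0:ℝ) T, ∀ x ∈ Set.Ioo (0:ℝ) 1, 0 ≤ a t x)
    (σ : ℝ)
    (η η' η'' : ℝ → ℝ)
    (hη_pos : ∀ x ∈ Set.Icc (0:ℝ) 1, 0 < η x)
    (hη1 : ∀ x ∈ Set.Icc (0:ℝ) 1, HasDerivWithinAt η (η' x) (Set.Icc 0 1) x)
    (hη2 : ∀ x ∈ Set.Icc (0:ℝ) 1, HasDerivWithinAt η' (η'' x) (Set.Icc 0 1) x)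
    (hcond : ∀ t ∈ Set.Ioo (0:ℝ) T, ∀ x ∈ Set.Ioo (0:ℝ) 1,
      a t x * η'' x + b t x * η' x + (σ + c t x) * η x ≤ 0) :
    ∀ ζ ∈ Set.Ico (0:ℝ) σ, ∀ g₀ g₁ k₀ k₁ : ℝ → ℝ,
      (∀ s ∈ Set.Ioc (0:ℝ) T, 0 < g₀ s) → (∀ s ∈ Set.Ioc (0:ℝ) T, 0 < g₁ s) →
      (∀ s ∈ Set.Ioc (0:ℝ) T, 1 ≤ k₀ s) → (∀ s ∈ Set.Ioc (0:ℝ) T, 1 ≤ k₁ s) →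
      ∀ t ∈ Set.Ioc (0:ℝ) T,
      sSup ((fun x => |u t x| / η x) '' Set.Icc 0 1) ≤
        max (Real.exp (-ζ * t) * sSup ((fun x => |u 0 x| / η x) '' Set.Icc 0 1))
          (sSup ((fun s =>
              max (max
                  (min (|u s 0| / η 0)
                    (g₀ s / η 0 * |ux s 0 - (η' 0 / η 0 + k₀ s / g₀ s) * u s 0|))
                  (min (|u s 1| / η 1)
                    (g₁ s / η 1 * |ux s 1 - (η' 1 / η 1 - k₁ s / g₁ s) * u s 1|)))
                (sSup ((fun x => |f s x| / η x) '' Set.Ioo 0 1) / (σ - ζ)) *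
              Real.exp (-ζ * (t - s))) '' Set.Ioc 0 t)) := by
  obtain ⟨M, hM⟩ := hf_bdd
  rintro ζ ⟨hζ, hζσ⟩ g₀ g₁ k₀ k₁ hg₀ hg₁ hk₀ hk₁ t ⟨ht, htT⟩
  have hηc : ContinuousOn η (Icc 0 1) := fun x hx => (hη1 x hx).continuousWithinAt
  obtain ⟨x₁, hx₁, hηmin⟩ := isCompact_Icc.exists_isMinOn (nonempty_Icc.2 zero_le_one) hηc
  obtain ⟨Cu, hCu⟩ := (isCompact_Icc.prod isCompact_Icc).exists_bound_of_continuousOn hu_cont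
  set N := fun s => weightedSup η (u s) (Icc 0 1)
  set G := fun s => forcingTerm (u s) (ux s) (f s) η η' (g₀ s) (g₁ s) (k₀ s) (k₁ s) σ ζ
  set Q := sSup ((fun s => G s * Real.exp (-ζ * (t - s))) '' Ioc 0 t)
  have hGQ : ∀ s ∈ Ioc 0 t, G s * Real.exp (ζ * s) ≤ Q * Real.exp (ζ * t) :=
    fun s hs => mul_exp_le_sSup_image (G := G) hζ (fun r hr => hr.2)
      (fun r _ => forcingTerm_nonneg (fun x hx => hη_pos x (Ioo_subset_Icc_self hx)) hζσ)
      (fun r hr => forcingTerm_le hζσ (hη_pos x₁ hx₁) (fun x hx => hηmin hx)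
        (hCu (r, 0) ⟨⟨hr.1.le, hr.2.trans htT⟩, by simp⟩)
        (hCu (r, 1) ⟨⟨hr.1.le, hr.2.trans htT⟩, by simp⟩) (hM r ⟨hr.1, hr.2.trans htT⟩)) hs
  have hm : N t * Real.exp (ζ * t) ≤ max (N 0) (Q * Real.exp (ζ * t)) := by
    refine image_le_of_ae_deriv_nonpos_above (m := fun s => N s * Real.exp (ζ * s)) ht.le
      ((continuousOn_weightedSup isCompact_Icc
        (hu_cont.mono (prod_mono (Icc_subset_Icc le_rfl htT) le_rfl)) hηc
        fun x hx => (hη_pos x hx).ne').mul (by fun_prop))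
      (fun α β hα hαβ hβ => absolutelyContinuousOnInterval_weightedSup_mul_exp hα hαβ
        (hβ.trans_le htT) hu_cont hut hut_cont hηc hη_pos) ?_ (by simp)
    filter_upwards [(ae_restrict_iff' measurableSet_Ioo).1 hC2_pde] with s hs hst hKs
    have hsT : s ∈ Ioo 0 T := ⟨hst.1, hst.2.trans_le htT⟩
    have hs' : s ∈ Ioc 0 T := ⟨hst.1, hsT.2.le⟩
    obtain ⟨hux, huxx, -, hpde⟩ := hs hsT
    exact deriv_weightedSup_mul_exp_nonpos
      (eventually_of_mem (isOpen_Ioo.mem_nhds hsT) fun τ hτ =>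
        hu_cont.uncurry_left τ (Ioo_subset_Icc_self hτ))
      (hut s hsT) (hux_bd s hs').1 (hux_bd s hs').2 hux huxx hpde (ha s hsT) (hcond s hsT)
      hη_pos hη1 hη2 (hg₀ s hs') (hg₁ s hs') (hk₀ s hs') (hk₁ s hs') hζσ
      (bddAbove_abs_div_of_abs_le (hη_pos x₁ hx₁) (fun x hx => hηmin (Ioo_subset_Icc_self hx))
        (hM s hs'))
      (lt_of_mul_lt_mul_right ((hGQ s ⟨hst.1, hst.2.le⟩).trans_lt
        ((le_max_right _ _).trans_lt hKs)) (Real.exp_pos _).le)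
  exact le_max_of_mul_exp_le_max hm

/-- **Theorem 2.2** (Karafyllis–Krstic): ISS-style maximum principle estimate in a
weighted sup norm, where the boundary terms may be replaced by expressions involving
the spatial derivative at the boundary, for arbitrary functions
`g₀, g₁ : (0,T] → (0,∞)` and `k₀, k₁ : (0,T] → [1,∞)`. -/
theorem thm2_2
    (T : ℝ) (hT : 0 < T)
    (a b c f : ℝ → ℝ → ℝ)
    (hf_bdd : ∃ M : ℝ, ∀ t ∈ Set.Ioc (0:ℝ) T, ∀ x ∈ Set.Ioo (0:ℝ) 1, |f t x| ≤ M)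
    (u ut ux uxx : ℝ → ℝ → ℝ)
    (hu_cont : ContinuousOn (fun p : ℝ × ℝ => u p.1 p.2) (Set.Icc 0 T ×ˢ Set.Icc 0 1))
    (hut : ∀ t ∈ Set.Ioo (0:ℝ) T, ∀ x ∈ Set.Icc (0:ℝ) 1,
      HasDerivAt (fun τ => u τ x) (ut t x) t)
    (hut_cont : ContinuousOn (fun p : ℝ × ℝ => ut p.1 p.2) (Set.Ioo 0 T ×ˢ Set.Icc 0 1))
    (hux_bd : ∀ t ∈ Set.Ioc (0:ℝ) T,
      HasDerivWithinAt (u t) (ux t 0) (Set.Icc 0 1) 0 ∧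
      HasDerivWithinAt (u t) (ux t 1) (Set.Icc 0 1) 1)
    (hC2_pde : ∀ᵐ t ∂(volume.restrict (Set.Ioo 0 T)),
      (∀ x ∈ Set.Ioo (0:ℝ) 1, HasDerivAt (u t) (ux t x) x) ∧
      (∀ x ∈ Set.Ioo (0:ℝ) 1, HasDerivAt (ux t) (uxx t x) x) ∧
      ContinuousOn (uxx t) (Set.Ioo 0 1) ∧
      (∀ x ∈ Set.Ioo (0:ℝ) 1,
        ut t x = a t x * uxx t x + b t x * ux t x + c t x * u t x + f t x))
    (ha : ∀ t ∈ Set.Ioo (0:ℝ) T, ∀ x ∈ Set.Ioo (0:ℝ) 1, 0 ≤ a t x)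
    (σ : ℝ) (hσ : 0 < σ)
    (η η' η'' : ℝ → ℝ)
    (hη_pos : ∀ x ∈ Set.Icc (0:ℝ) 1, 0 < η x)
    (hη1 : ∀ x ∈ Set.Icc (0:ℝ) 1, HasDerivWithinAt η (η' x) (Set.Icc 0 1) x)
    (hη2 : ∀ x ∈ Set.Icc (0:ℝ) 1, HasDerivWithinAt η' (η'' x) (Set.Icc 0 1) x)
    (hη''_cont : ContinuousOn η'' (Set.Icc 0 1))
    (hcond : ∀ t ∈ Set.Ioo (0:ℝ) T, ∀ x ∈ Set.Ioo (0:ℝ) 1,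
      a t x * η'' x + b t x * η' x + (σ + c t x) * η x ≤ 0) :
    ∀ ζ ∈ Set.Ico (0:ℝ) σ, ∀ g₀ g₁ k₀ k₁ : ℝ → ℝ,
      (∀ s ∈ Set.Ioc (0:ℝ) T, 0 < g₀ s) → (∀ s ∈ Set.Ioc (0:ℝ) T, 0 < g₁ s) →
      (∀ s ∈ Set.Ioc (0:ℝ) T, 1 ≤ k₀ s) → (∀ s ∈ Set.Ioc (0:ℝ) T, 1 ≤ k₁ s) →
      ∀ t ∈ Set.Ioc (0:ℝ) T,
      sSup ((fun x => |u t x| / η x) '' Set.Icc 0 1) ≤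
        max (Real.exp (-ζ * t) * sSup ((fun x => |u 0 x| / η x) '' Set.Icc 0 1))
          (sSup ((fun s =>
              max (max
                  (min (|u s 0| / η 0)
                    (g₀ s / η 0 * |ux s 0 - (η' 0 / η 0 + k₀ s / g₀ s) * u s 0|))
                  (min (|u s 1| / η 1)
                    (g₁ s / η 1 * |ux s 1 - (η' 1 / η 1 - k₁ s / g₁ s) * u s 1|)))
                (sSup ((fun x => |f s x| / η x) '' Set.Ioo 0 1) / (σ - ζ)) *
              Real.exp (-ζ * (t - s))) '' Set.Ioc 0 t)) :=
  thm2_2_general T a b c f hf_bdd u ut ux uxx hu_cont hut hut_cont hux_bd hC2_pde ha σ η η' η''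
    hη_pos hη1 hη2 hcond
end

section
/- Let T > 0, let a, b, c, f : (0,T) × (0,1) → ℝ with sup_{0<x<1, 0<t≤T} |f(t,x)| < +∞, let u ∈ C⁰([0,T] × [0,1]) with u[t] ∈ C²((0,1)) for almost all t ∈ (0,T), ∂u/∂t continuous on (0,T) × [0,1], ∂u/∂x(t,0) and ∂u/∂x(t,1) existing for all t ∈ (0,T], satisfying ∂u/∂t = a·∂²u/∂x² + b·∂u/∂x + c·u + f for almost all t and all x ∈ (0,1). Let μ₁ > 0, λ₁ ∈ ℝ be constants. Suppose a ≥ 0 on (0,T)×(0,1), there exist σ > 0 and η ∈ C²([0,1];(0,+∞)) with aη'' + bη' + (σ+c)η ≤ 0 on (0,T)×(0,1), and μ₁η'(1) + λ₁η(1) > 0. Then for all ζ ∈ [0,σ) and t ∈ (0,T]: ‖u[t]‖_{∞,η} ≤ max( exp(−ζt)·‖u[0]‖_{∞,η}, sup_{0<s≤t} max( r₀(s), r₁(s), ‖f[s]‖_{∞,η}/(σ−ζ) )·exp(−ζ(t−s)) ), where r₀(t) := |u(t,0)|/η(0) and r₁(t) := min( |u(t,1)|/η(1), |μ₁·∂u/∂x(t,1)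 + λ₁·u(t,1)| / (μ₁η'(1) + λ₁η(1)) ). -/
/-!
Put `w(s, x) = exp (ζ s) u(s, x) / η(x)` and let `K` be `exp (ζ t)` times the right-hand side.
Suppose that at a time `τ` where the equation holds the maximum of `w(τ, ·)` exceeds `K`. It is
not attained at `x = 0`, where `w ≤ K` by the boundary term `r₀`, nor at `x = 1`, where
`∂ₓ(u / η) ≥ 0` turns the Robin bound in `r₁` into `w ≤ K`. At an interior maximum `x₀`, the
function `u - (u / η)(x₀) η` has a local maximum, so `uₓ = (u / η)(x₀) ηₓ` and
`uₓₓ ≤ (u / η)(x₀) ηₓₓ` there, and the supersolution inequality for `η` gives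
`∂ₜw ≤ (σ - ζ) (K - w)`. The equation holds only for almost every time, but `∂ₜu` is continuous,
so this negative time derivative persists on a short interval before `τ`; a continuous induction
in time then shows that `w` never exceeds `K + ε`. Applying this to `u` and `-u` bounds `|u|`.
-/

open Set MeasureTheory Filter Topology Real

theorem IsLocalMax.second_deriv_nonpos {f f' : ℝ → ℝ} {x₀ f'' : ℝ} (h : IsLocalMax f x₀)
    (hf : ∀ᶠ x in 𝓝 x₀, HasDerivAt f (f' x) x) (hf' : HasDerivAt f' f'' x₀) : f'' ≤ 0 := by
  by_contra! hpos
  have hd : deriv f =ᶠ[𝓝 x₀] f' := hf.mono fun x hx => hx.deriv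
  have hdd : deriv (deriv f) x₀ = f'' := hd.deriv_eq.trans hf'.deriv
  have hmin : IsLocalMin f x₀ := isLocalMin_of_deriv_deriv_pos (hdd ▸ hpos)
    (hd.eq_of_nhds.trans (h.hasDerivAt_eq_zero hf.self_of_nhds)) hf.self_of_nhds.continuousAt
  have hconst : f =ᶠ[𝓝 x₀] fun _ => f x₀ := (h.and hmin).mono fun x hx => le_antisymm hx.1 hx.2
  have : deriv (deriv f) x₀ = 0 := by simp [hconst.deriv.deriv_eq]
  linarith

theorem IsMaxOn.nonneg_of_hasDerivWithinAt_Icc_right {f : ℝ → ℝ} {a b f' : ℝ} (hab : a < b)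
    (h : IsMaxOn f (Icc a b) b) (hf : HasDerivWithinAt f f' (Icc a b) b) : 0 ≤ f' := by
  have hcone : a - b ∈ posTangentConeAt (Icc a b) b :=
    sub_mem_posTangentConeAt_of_segment_subset (segment_symm ℝ b a ▸ segment_subset_Icc hab.le)
  have := h.localize.hasFDerivWithinAt_nonpos hf.hasFDerivWithinAt hcone
  simp only [ContinuousLinearMap.toSpanSingleton_apply, smul_eq_mul] at this
  nlinarith

theorem IsMaxOn.isMaxOn_sub_div_mul {v η : ℝ → ℝ} {s : Set ℝ} {x₀ : ℝ}
    (h : IsMaxOn (fun x => v x / η x) s x₀) (hη : ∀ x ∈ s, 0 < η x) (hx₀ : x₀ ∈ s) :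
    IsMaxOn (fun x => v x - v x₀ / η x₀ * η x) s x₀ := by
  intro x hx
  have hx' : v x / η x ≤ v x₀ / η x₀ := h hx
  show v x - v x₀ / η x₀ * η x ≤ v x₀ - v x₀ / η x₀ * η x₀
  rw [div_mul_cancel₀ _ (hη x₀ hx₀).ne', sub_self, sub_nonpos]
  rwa [div_le_iff₀ (hη x hx)] at hx'

theorem le_neg_mul_of_isMaxOn_div {v v' η η' : ℝ → ℝ} {v'' η'' x₀ A B c σ : ℝ} {s : Set ℝ}
    (hs : s ∈ 𝓝 x₀) (hmax : IsMaxOn (fun x => v x / η x) s x₀) (hη : ∀ x ∈ s, 0 < η x)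
    (hv : ∀ᶠ x in 𝓝 x₀, HasDerivAt v (v' x) x) (hv' : HasDerivAt v' v'' x₀)
    (hη' : ∀ᶠ x in 𝓝 x₀, HasDerivAt η (η' x) x) (hη'' : HasDerivAt η' η'' x₀)
    (hv₀ : 0 ≤ v x₀) (hA : 0 ≤ A) (hsuper : A * η'' + B * η' x₀ + (σ + c) * η x₀ ≤ 0) :
    A * v'' + B * v' x₀ + c * v x₀ ≤ -σ * v x₀ := by
  set C := v x₀ / η x₀
  have hηx₀ := hη x₀ (mem_of_mem_nhds hs)
  have hC : 0 ≤ C := div_nonneg hv₀ hηx₀.le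
  have hvC : v x₀ = C * η x₀ := (div_mul_cancel₀ _ hηx₀.ne').symm
  have hloc : IsLocalMax (fun x => v x - C * η x) x₀ :=
    (hmax.isMaxOn_sub_div_mul hη (mem_of_mem_nhds hs)).isLocalMax hs
  have hderiv : ∀ᶠ x in 𝓝 x₀, HasDerivAt (fun x => v x - C * η x) (v' x - C * η' x) x :=
    (hv.and hη').mono fun x h => h.1.sub (h.2.const_mul C)
  have hfirst : v' x₀ = C * η' x₀ :=
    sub_eq_zero.1 (hloc.hasDerivAt_eq_zero hderiv.self_of_nhds)
  have hsecond : v'' - C * η'' ≤ 0 := hloc.second_deriv_nonpos hderiv (hv'.sub (hη''.const_mul C))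
  rw [hvC, hfirst]
  nlinarith [mul_le_mul_of_nonneg_left hsecond hA, mul_le_mul_of_nonneg_left hsuper hC]

theorem IsMaxOn.div_le_robin_of_Icc_right {v η : ℝ → ℝ} {a b v' η' μ lam : ℝ} (hab : a < b)
    (hmax : IsMaxOn (fun x => v x / η x) (Icc a b) b) (hv : HasDerivWithinAt v v' (Icc a b) b)
    (hη : HasDerivWithinAt η η' (Icc a b) b) (hηb : 0 < η b) (hμ : 0 < μ)
    (hrobin : 0 < μ * η' + lam * η b) :
    v b / η b ≤ (μ * v' + lam * v b) / (μ * η' + lam * η b) := by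
  have hslope : 0 ≤ (v' * η b - v b * η') / η b ^ 2 :=
    hmax.nonneg_of_hasDerivWithinAt_Icc_right hab (hv.div hη hηb.ne')
  have hcross : v b * η' ≤ v' * η b := by
    rw [div_nonneg_iff] at hslope
    rcases hslope with h | h
    · linarith [h.1]
    · nlinarith [h.2, pow_pos hηb 2]
  rw [div_le_div_iff₀ hηb hrobin]
  nlinarith [mul_le_mul_of_nonneg_left hcross hμ.le]

theorem time_deriv_le_of_isMaxOn {v v' v'' vt A B c F η η' η'' : ℝ → ℝ} {μ lam σ ζ K E x₀ : ℝ}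
    (hE : 0 < E) (hK : 0 ≤ K) (hμ : 0 < μ) (hη : ∀ x ∈ Icc (0:ℝ) 1, 0 < η x)
    (hη1 : ∀ x ∈ Icc (0:ℝ) 1, HasDerivWithinAt η (η' x) (Icc 0 1) x)
    (hη2 : ∀ x ∈ Icc (0:ℝ) 1, HasDerivWithinAt η' (η'' x) (Icc 0 1) x)
    (hrobin : 0 < μ * η' 1 + lam * η 1)
    (hv : ∀ x ∈ Ioo (0:ℝ) 1, HasDerivAt v (v' x) x)
    (hv' : ∀ x ∈ Ioo (0:ℝ) 1, HasDerivAt v' (v'' x) x)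
    (hv1 : HasDerivWithinAt v (v' 1) (Icc 0 1) 1)
    (hA : ∀ x ∈ Ioo (0:ℝ) 1, 0 ≤ A x)
    (hsuper : ∀ x ∈ Ioo (0:ℝ) 1, A x * η'' x + B x * η' x + (σ + c x) * η x ≤ 0)
    (hpde : ∀ x ∈ Ioo (0:ℝ) 1, vt x = A x * v'' x + B x * v' x + c x * v x + F x)
    (hleft : E * (v 0 / η 0) ≤ K)
    (hright : E * (v 1 / η 1) ≤ K ∨ E * ((μ * v' 1 + lam * v 1) / (μ * η' 1 + lam * η 1)) ≤ K)
    (hF : ∀ x ∈ Ioo (0:ℝ) 1, E * (F x / η x) ≤ (σ - ζ) * K)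
    (hx₀ : x₀ ∈ Icc (0:ℝ) 1) (hmax : IsMaxOn (fun x => E * (v x / η x)) (Icc 0 1) x₀)
    (hlt : K < E * (v x₀ / η x₀)) :
    E * ((vt x₀ + ζ * v x₀) / η x₀) ≤ (σ - ζ) * (K - E * (v x₀ / η x₀)) := by
  have hmax' : IsMaxOn (fun x => v x / η x) (Icc 0 1) x₀ :=
    fun x hx => le_of_mul_le_mul_left (hmax hx) hE
  have hx₀' : x₀ ∈ Ioo (0:ℝ) 1 := by
    refine ⟨hx₀.1.lt_of_ne ?_, hx₀.2.lt_of_ne ?_⟩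
    · rintro rfl
      linarith
    · rintro rfl
      have hrob := hmax'.div_le_robin_of_Icc_right one_pos hv1 (hη1 1 hx₀) (hη 1 hx₀) hμ hrobin
      rcases hright with h | h
      · linarith
      · nlinarith [mul_le_mul_of_nonneg_left hrob hE.le]
  have hηx₀ := hη x₀ hx₀
  have hv₀ : 0 < v x₀ :=
    (div_pos_iff_of_pos_right hηx₀).1 (lt_of_mul_lt_mul_left (by linarith) hE.le)
  have hnhds : Ioo (0:ℝ) 1 ∈ 𝓝 x₀ := Ioo_mem_nhds hx₀'.1 hx₀'.2
  have hop := le_neg_mul_of_isMaxOn_div (Icc_mem_nhds hx₀'.1 hx₀'.2) hmax' hη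
    (eventually_of_mem hnhds hv) (hv' x₀ hx₀')
    (eventually_of_mem hnhds fun x hx =>
      (hη1 x (Ioo_subset_Icc_self hx)).hasDerivAt (Icc_mem_nhds hx.1 hx.2))
    ((hη2 x₀ hx₀).hasDerivAt (Icc_mem_nhds hx₀'.1 hx₀'.2)) hv₀.le (hA x₀ hx₀') (hsuper x₀ hx₀')
  have hvt : vt x₀ + ζ * v x₀ ≤ (ζ - σ) * v x₀ + F x₀ := by
    rw [hpde x₀ hx₀']
    linarith
  have hFx := hF x₀ hx₀'
  calc E * ((vt x₀ + ζ * v x₀) / η x₀) ≤ E * (((ζ - σ) * v x₀ + F x₀) / η x₀) :=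
        mul_le_mul_of_nonneg_left (div_le_div_of_nonneg_right hvt hηx₀.le) hE.le
    _ = (ζ - σ) * (E * (v x₀ / η x₀)) + E * (F x₀ / η x₀) := by ring
    _ ≤ (σ - ζ) * (K - E * (v x₀ / η x₀)) := by linarith

section TimeMaximum

variable {W Wt : ℝ → ℝ → ℝ} {t₁ : ℝ}

theorem exists_forall_le_of_time_deriv_le_at_max
    (hW : ContinuousOn W.uncurry (Icc 0 t₁ ×ˢ Icc 0 1))
    (hWt : ContinuousOn Wt.uncurry (Ioo 0 t₁ ×ˢ Icc 0 1))
    (hderiv : ∀ s ∈ Ioo 0 t₁, ∀ x ∈ Icc (0:ℝ) 1, HasDerivAt (W · x) (Wt s x) s)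
    {L δ : ℝ} (hδ : 0 < δ)
    (hmax : ∀ᵐ τ ∂volume.restrict (Ioo 0 t₁), ∀ x₀ ∈ Icc (0:ℝ) 1,
      IsMaxOn (W τ) (Icc 0 1) x₀ → L < W τ x₀ → Wt τ x₀ ≤ -δ)
    {s y : ℝ} (hs : s ∈ Ioo 0 t₁) (hsL : ∀ x ∈ Icc (0:ℝ) 1, W s x ≤ L) (hy : s < y) :
    ∃ τ ∈ Ioc s y, ∀ x ∈ Icc (0:ℝ) 1, W τ x ≤ L := by
  -- `Wt` is continuous at the time `s`, uniformly in `x`: this carries `Wt τ x₀ ≤ -δ` at the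
  -- good time `τ` back to `Wt r x₀ ≤ 0` for all `r ∈ [s, τ]`.
  obtain ⟨v, hv, hclose⟩ := isCompact_Icc.mem_uniformity_of_prod hWt hs
    (Metric.dist_mem_uniformity (half_pos hδ))
  rw [nhdsWithin_eq_nhds.2 (isOpen_Ioo.mem_nhds hs), Metric.mem_nhds_iff] at hv
  obtain ⟨ρ, hρ, hball⟩ := hv
  set z := min (min (s + ρ / 2) y) t₁
  have hsz : s < z := lt_min (lt_min (by linarith) hy) hs.2
  have hzρ : z ≤ s + ρ / 2 := (min_le_left _ _).trans (min_le_left _ _)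
  have hsub : Ioo s z ⊆ Ioo 0 t₁ := Ioo_subset_Ioo hs.1.le (min_le_right _ _)
  have hnear : ∀ r ∈ Icc s z, ∀ x ∈ Icc (0:ℝ) 1, dist (Wt r x) (Wt s x) < δ / 2 := by
    intro r hr x hx
    refine hclose r (hball ?_) x hx
    rw [Metric.mem_ball, Real.dist_eq, abs_lt]
    constructor <;> linarith [hr.1, hr.2]
  obtain ⟨τ, hτ, hτmax⟩ := Measure.exists_mem_of_measure_ne_zero_of_ae
    (by simp [Real.volume_Ioo, hsz]) (ae_restrict_of_ae_restrict_of_subset hsub hmax)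
  refine ⟨τ, ⟨hτ.1, hτ.2.le.trans ((min_le_left _ _).trans (min_le_right _ _))⟩, ?_⟩
  by_contra! hbad
  obtain ⟨x, hx, hWx⟩ := hbad
  obtain ⟨x₀, hx₀, hx₀max⟩ := isCompact_Icc.exists_isMaxOn ⟨x, hx⟩
    (ContinuousOn.uncurry_left τ (Ioo_subset_Icc_self (hsub hτ)) hW)
  have hτneg : Wt τ x₀ ≤ -δ := hτmax x₀ hx₀ hx₀max (hWx.trans_le (hx₀max hx))
  have hdecr : W τ x₀ ≤ W s x₀ := by
    refine antitoneOn_of_deriv_nonpos (f := (W · x₀)) (convex_Icc s τ) ?_ ?_ ?_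
      (left_mem_Icc.2 hτ.1.le) (right_mem_Icc.2 hτ.1.le) hτ.1.le
    · exact (hW.uncurry_right x₀ hx₀).mono (Icc_subset_Icc hs.1.le (hsub hτ).2.le)
    · rw [interior_Icc]
      exact fun r hr => (hderiv r (hsub ⟨hr.1, hr.2.trans hτ.2⟩) x₀ hx₀).differentiableAt
        |>.differentiableWithinAt
    · rw [interior_Icc]
      intro r hr
      have hr' : r ∈ Ioo 0 t₁ := hsub ⟨hr.1, hr.2.trans hτ.2⟩
      rw [(hderiv r hr' x₀ hx₀).deriv]
      have h1 := hnear r ⟨hr.1.le, hr.2.le.trans hτ.2.le⟩ x₀ hx₀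
      have h2 := hnear τ ⟨hτ.1.le, hτ.2.le⟩ x₀ hx₀
      rw [Real.dist_eq, abs_lt] at h1 h2
      linarith [h1.2, h2.1]
  have hxx₀ : W τ x ≤ W τ x₀ := hx₀max hx
  linarith [hsL x₀ hx₀]

theorem le_of_time_deriv_le_at_max {K c : ℝ} (ht₁ : 0 < t₁)
    (hW : ContinuousOn W.uncurry (Icc 0 t₁ ×ˢ Icc 0 1))
    (hWt : ContinuousOn Wt.uncurry (Ioo 0 t₁ ×ˢ Icc 0 1))
    (hderiv : ∀ s ∈ Ioo 0 t₁, ∀ x ∈ Icc (0:ℝ) 1, HasDerivAt (W · x) (Wt s x) s) (hc : 0 < c)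
    (hmax : ∀ᵐ τ ∂volume.restrict (Ioo 0 t₁), ∀ x₀ ∈ Icc (0:ℝ) 1,
      IsMaxOn (W τ) (Icc 0 1) x₀ → K < W τ x₀ → Wt τ x₀ ≤ c * (K - W τ x₀))
    (h0 : ∀ x ∈ Icc (0:ℝ) 1, W 0 x ≤ K) :
    ∀ x ∈ Icc (0:ℝ) 1, W t₁ x ≤ K := by
  intro x hx
  refine le_of_forall_pos_le_add fun ε hε => ?_
  set S := ⋂ x ∈ Icc (0:ℝ) 1, (W · x) ⁻¹' Iic (K + ε)
  have hS : ∀ {s}, s ∈ S ↔ ∀ x ∈ Icc (0:ℝ) 1, W s x ≤ K + ε := by simp [S]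
  obtain ⟨t₀, ht₀S, ht₀⟩ : (S ∩ Ioc 0 t₁).Nonempty := by
    obtain ⟨v, hv, hclose⟩ := isCompact_Icc.mem_uniformity_of_prod hW (left_mem_Icc.2 ht₁.le)
      (Metric.dist_mem_uniformity hε)
    have := left_nhdsWithin_Ioc_neBot ht₁
    obtain ⟨t₀, ht₀v, ht₀⟩ := Filter.nonempty_of_mem
      (inter_mem (nhdsWithin_mono _ Ioc_subset_Icc_self hv) self_mem_nhdsWithin)
    refine ⟨t₀, hS.2 fun x hx => ?_, ht₀⟩
    have : dist (W t₀ x) (W 0 x) < ε := hclose t₀ ht₀v x hx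
    rw [Real.dist_eq, abs_lt] at this
    linarith [h0 x hx, this.2]
  have hclosed : IsClosed (S ∩ Icc t₀ t₁) := by
    rw [inter_comm, ← inter_biInter ⟨0, left_mem_Icc.2 zero_le_one⟩]
    exact isClosed_biInter fun x hx => ((hW.uncurry_right x hx).mono
      (Icc_subset_Icc_left ht₀.1.le)).preimage_isClosed_of_isClosed isClosed_Icc isClosed_Iic
  refine hS.1 (hclosed.Icc_subset_of_forall_exists_gt ht₀S ?_ (right_mem_Icc.2 ht₀.2)) x hx
  rintro s ⟨hsS, hs⟩ y hy
  obtain ⟨τ, hτ, hτS⟩ := exists_forall_le_of_time_deriv_le_at_max hW hWt hderiv (mul_pos hc hε)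
    (hmax.mono fun τ h x₀ hx₀ hx₀max hlt => by nlinarith [h x₀ hx₀ hx₀max (by linarith)])
    ⟨ht₀.1.trans_le hs.1, hs.2⟩ (hS.1 hsS) hy
  exact ⟨τ, hS.2 hτS, hτ⟩

end TimeMaximum

theorem continuousOn_exp_mul_div {g : ℝ → ℝ → ℝ} {η : ℝ → ℝ} {s : Set ℝ} {ζ : ℝ}
    (hg : ContinuousOn g.uncurry (s ×ˢ Icc 0 1)) (hη : ContinuousOn η (Icc 0 1))
    (hpos : ∀ x ∈ Icc (0:ℝ) 1, 0 < η x) :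
    ContinuousOn (fun p : ℝ × ℝ => exp (ζ * p.1) * (g p.1 p.2 / η p.2)) (s ×ˢ Icc 0 1) :=
  (continuous_exp.comp (continuous_const.mul continuous_fst)).continuousOn.mul
    (hg.div (hη.comp continuous_snd.continuousOn fun _ hp => hp.2) fun p hp => (hpos p.2 hp.2).ne')

theorem mul_div_le_mul_abs_div {E d : ℝ} (p : ℝ) (hE : 0 ≤ E) (hd : 0 ≤ d) :
    E * (p / d) ≤ E * (|p| / d) :=
  mul_le_mul_of_nonneg_left (div_le_div_of_nonneg_right (le_abs_self p) hd) hE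

theorem exists_forall_abs_div_le {g : ℝ → ℝ → ℝ} {η : ℝ → ℝ} {A B k : Set ℝ} {M : ℝ}
    (hk : IsCompact k) (hBk : B ⊆ k) (hη : ContinuousOn η k) (hpos : ∀ x ∈ k, 0 < η x)
    (hg : ∀ s ∈ A, ∀ x ∈ B, |g s x| ≤ M) : ∃ C, ∀ s ∈ A, ∀ x ∈ B, |g s x| / η x ≤ C := by
  obtain ⟨C, hC⟩ := hk.exists_bound_of_continuousOn (hη.inv₀ fun x hx => (hpos x hx).ne')
  refine ⟨M * C, fun s hs x hx => ?_⟩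
  have hinv : (η x)⁻¹ ≤ C := (le_abs_self _).trans (hC x (hBk hx))
  rw [div_eq_mul_inv]
  exact mul_le_mul (hg s hs x hx) hinv (inv_nonneg.2 (hpos x (hBk hx)).le)
    ((abs_nonneg _).trans (hg s hs x hx))

theorem exp_mul_le_exp_mul_csSup {G : ℝ → ℝ} {ζ t C : ℝ} (hζ : 0 ≤ ζ)
    (hG0 : ∀ s ∈ Ioc 0 t, 0 ≤ G s) (hGC : ∀ s ∈ Ioc 0 t, G s ≤ C) :
    ∀ s ∈ Ioc 0 t,
      exp (ζ * s) * G s ≤ exp (ζ * t) * sSup ((fun s => G s * exp (-ζ * (t - s))) '' Ioc 0 t) := by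
  intro s hs
  have hbdd : BddAbove ((fun s => G s * exp (-ζ * (t - s))) '' Ioc 0 t) := by
    refine ⟨C, forall_mem_image.2 fun r hr => ?_⟩
    have hexp : exp (-ζ * (t - r)) ≤ 1 := exp_le_one_iff.2 (by nlinarith [hr.2])
    exact (mul_le_of_le_one_right (hG0 r hr) hexp).trans (hGC r hr)
  calc exp (ζ * s) * G s = exp (ζ * t) * (G s * exp (-ζ * (t - s))) := by
        rw [mul_left_comm, ← exp_add]
        ring_nf
    _ ≤ _ := mul_le_mul_of_nonneg_left (le_csSup hbdd (mem_image_of_mem _ hs)) (exp_pos _).le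

structure IsClassicalSolution (T : ℝ) (a b c f u ut ux uxx : ℝ → ℝ → ℝ) : Prop where
  continuousOn : ContinuousOn u.uncurry (Icc 0 T ×ˢ Icc 0 1)
  hasDerivAt_time : ∀ t ∈ Ioo 0 T, ∀ x ∈ Icc (0:ℝ) 1, HasDerivAt (u · x) (ut t x) t
  continuousOn_time_deriv : ContinuousOn ut.uncurry (Ioo 0 T ×ˢ Icc 0 1)
  hasDerivWithinAt_one : ∀ t ∈ Ioc 0 T, HasDerivWithinAt (u t) (ux t 1) (Icc 0 1) 1
  ae_pde : ∀ᵐ t ∂volume.restrict (Ioo 0 T),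
    (∀ x ∈ Ioo (0:ℝ) 1, HasDerivAt (u t) (ux t x) x) ∧
    (∀ x ∈ Ioo (0:ℝ) 1, HasDerivAt (ux t) (uxx t x) x) ∧
    ∀ x ∈ Ioo (0:ℝ) 1, ut t x = a t x * uxx t x + b t x * ux t x + c t x * u t x + f t x

/-- `max (r₀ s, r₁ s, ‖f[s]‖_{∞,η} / (σ - ζ))` in the notation of the statement. -/
noncomputable def inputBound (u ux f : ℝ → ℝ → ℝ) (η η' : ℝ → ℝ) (μ lam σ ζ s : ℝ) : ℝ :=
  max (max (|u s 0| / η 0)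
      (min (|u s 1| / η 1) (|μ * ux s 1 + lam * u s 1| / (μ * η' 1 + lam * η 1))))
    (sSup ((fun x => |f s x| / η x) '' Ioo 0 1) / (σ - ζ))

section Solution

variable {T : ℝ} {a b c f u ut ux uxx : ℝ → ℝ → ℝ} {η η' η'' : ℝ → ℝ} {μ lam σ ζ K t : ℝ}

theorem IsClassicalSolution.neg (hu : IsClassicalSolution T a b c f u ut ux uxx) :
    IsClassicalSolution T a b c (-f) (-u) (-ut) (-ux) (-uxx) where
  continuousOn := hu.continuousOn.neg
  hasDerivAt_time t ht x hx := (hu.hasDerivAt_time t ht x hx).neg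
  continuousOn_time_deriv := hu.continuousOn_time_deriv.neg
  hasDerivWithinAt_one t ht := (hu.hasDerivWithinAt_one t ht).neg
  ae_pde := hu.ae_pde.mono fun t ⟨hv, hv', hpde⟩ =>
    ⟨fun x hx => (hv x hx).neg, fun x hx => (hv' x hx).neg, fun x hx => by
      simp only [Pi.neg_apply, hpde x hx]
      ring⟩

theorem inputBound_neg (u ux f : ℝ → ℝ → ℝ) (η η' : ℝ → ℝ) (μ lam σ ζ s : ℝ) :
    inputBound (-u) (-ux) (-f) η η' μ lam σ ζ s = inputBound u ux f η η' μ lam σ ζ s := by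
  simp only [inputBound, Pi.neg_apply, abs_neg, mul_neg, ← neg_add]

theorem inputBound_nonneg {s : ℝ} (hη0 : 0 ≤ η 0) : 0 ≤ inputBound u ux f η η' μ lam σ ζ s :=
  (div_nonneg (abs_nonneg _) hη0).trans ((le_max_left _ _).trans (le_max_left _ _))

theorem inputBound_le {s C C' : ℝ} (hζ : ζ < σ) (h0 : |u s 0| / η 0 ≤ C) (h1 : |u s 1| / η 1 ≤ C)
    (hf : ∀ x ∈ Ioo (0:ℝ) 1, |f s x| / η x ≤ C') :
    inputBound u ux f η η' μ lam σ ζ s ≤ max C (C' / (σ - ζ)) :=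
  max_le_max (max_le h0 ((min_le_left _ _).trans h1)) <| div_le_div_of_nonneg_right
    (csSup_le ((nonempty_Ioo.2 zero_lt_one).image _) (forall_mem_image.2 hf)) (sub_pos.2 hζ).le

section InputBounds

variable {E s : ℝ} (hE : 0 ≤ E) (h : E * inputBound u ux f η η' μ lam σ ζ s ≤ K)
include hE h

theorem mul_div_le_of_mul_inputBound_le_left (hη0 : 0 < η 0) : E * (u s 0 / η 0) ≤ K :=
  (mul_div_le_mul_abs_div _ hE hη0.le).trans <|
    (mul_le_mul_of_nonneg_left ((le_max_left _ _).trans (le_max_left _ _)) hE).trans h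

theorem mul_div_le_of_mul_inputBound_le_right (hη1 : 0 < η 1)
    (hrobin : 0 < μ * η' 1 + lam * η 1) :
    E * (u s 1 / η 1) ≤ K ∨ E * ((μ * ux s 1 + lam * u s 1) / (μ * η' 1 + lam * η 1)) ≤ K := by
  have hmin := (mul_le_mul_of_nonneg_left ((le_max_right _ _).trans (le_max_left _ _)) hE).trans h
  rw [mul_min_of_nonneg _ _ hE, min_le_iff] at hmin
  exact hmin.imp (mul_div_le_mul_abs_div _ hE hη1.le).trans
    (mul_div_le_mul_abs_div _ hE hrobin.le).trans

theorem mul_div_le_of_mul_inputBound_le_source (hζ : ζ < σ)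
    (hf : BddAbove ((fun x => |f s x| / η x) '' Ioo 0 1)) {x : ℝ} (hx : x ∈ Ioo (0:ℝ) 1)
    (hηx : 0 < η x) : E * (f s x / η x) ≤ (σ - ζ) * K := by
  have hσζ : 0 < σ - ζ := sub_pos.2 hζ
  have hsup : |f s x| / η x ≤ (σ - ζ) * inputBound u ux f η η' μ lam σ ζ s := by
    rw [← div_le_iff₀' hσζ]
    exact (div_le_div_of_nonneg_right (le_csSup hf (mem_image_of_mem _ hx)) hσζ.le).trans
      (le_max_right _ _)
  calc E * (f s x / η x) ≤ E * ((σ - ζ) * inputBound u ux f η η' μ lam σ ζ s) :=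
        (mul_div_le_mul_abs_div _ hE hηx.le).trans (mul_le_mul_of_nonneg_left hsup hE)
    _ = (σ - ζ) * (E * inputBound u ux f η η' μ lam σ ζ s) := by ring
    _ ≤ (σ - ζ) * K := mul_le_mul_of_nonneg_left h hσζ.le

end InputBounds

variable (ha : ∀ t ∈ Ioo (0:ℝ) T, ∀ x ∈ Ioo (0:ℝ) 1, 0 ≤ a t x) (hμ : 0 < μ)
  (hη : ∀ x ∈ Icc (0:ℝ) 1, 0 < η x)
  (hη1 : ∀ x ∈ Icc (0:ℝ) 1, HasDerivWithinAt η (η' x) (Icc 0 1) x)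
  (hη2 : ∀ x ∈ Icc (0:ℝ) 1, HasDerivWithinAt η' (η'' x) (Icc 0 1) x)
  (hsuper : ∀ t ∈ Ioo (0:ℝ) T, ∀ x ∈ Ioo (0:ℝ) 1,
    a t x * η'' x + b t x * η' x + (σ + c t x) * η x ≤ 0)
  (hrobin : 0 < μ * η' 1 + lam * η 1) (hζ : ζ < σ)
include ha hμ hη hη1 hη2 hsuper hrobin hζ

theorem IsClassicalSolution.exp_mul_div_le (hu : IsClassicalSolution T a b c f u ut ux uxx)
    (ht : t ∈ Ioc 0 T)
    (h0 : ∀ x ∈ Icc (0:ℝ) 1, |u 0 x| / η x ≤ K)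
    (hinput : ∀ s ∈ Ioc 0 t, exp (ζ * s) * inputBound u ux f η η' μ lam σ ζ s ≤ K)
    (hf : ∀ s ∈ Ioc 0 t, BddAbove ((fun x => |f s x| / η x) '' Ioo 0 1)) :
    ∀ x ∈ Icc (0:ℝ) 1, exp (ζ * t) * (u t x / η x) ≤ K := by
  have h₀ : (0:ℝ) ∈ Icc (0:ℝ) 1 := left_mem_Icc.2 zero_le_one
  have hK : 0 ≤ K := (div_nonneg (abs_nonneg _) (hη 0 h₀).le).trans (h0 0 h₀)
  have hη_cont : ContinuousOn η (Icc 0 1) := fun x hx => (hη1 x hx).continuousWithinAt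
  have hW := continuousOn_exp_mul_div (ζ := ζ)
    (hu.continuousOn.mono (prod_mono (Icc_subset_Icc_right ht.2) subset_rfl)) hη_cont hη
  have hWt := continuousOn_exp_mul_div (ζ := ζ) (g := fun s x => ut s x + ζ * u s x)
    ((hu.continuousOn_time_deriv.add (continuousOn_const.mul (hu.continuousOn.mono
      (prod_mono Ioo_subset_Icc_self subset_rfl)))).mono
        (prod_mono (Ioo_subset_Ioo_right ht.2) subset_rfl)) hη_cont hη
  refine le_of_time_deriv_le_at_max (W := fun s x => exp (ζ * s) * (u s x / η x))
    (Wt := fun s x => exp (ζ * s) * ((ut s x + ζ * u s x) / η x)) ht.1 hW hWt ?_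
    (sub_pos.2 hζ) ?_ ?_
  · intro s hs x hx
    have hexp : HasDerivAt (fun τ => exp (ζ * τ)) (exp (ζ * s) * ζ) s := by
      simpa using ((hasDerivAt_id s).const_mul ζ).exp
    refine (hexp.mul ((hu.hasDerivAt_time s ⟨hs.1, hs.2.trans_le ht.2⟩ x hx).div_const
      (η x))).congr_deriv ?_
    ring
  · filter_upwards [ae_restrict_of_ae_restrict_of_subset (Ioo_subset_Ioo_right ht.2) hu.ae_pde,
      ae_restrict_mem measurableSet_Ioo] with τ ⟨hv, hv', hpde⟩ hτ
    have hτT : τ ∈ Ioo 0 T := ⟨hτ.1, hτ.2.trans_le ht.2⟩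
    have hτt : τ ∈ Ioc 0 t := Ioo_subset_Ioc_self hτ
    have hE := (exp_pos (ζ * τ)).le
    exact fun x₀ hx₀ hmax hlt => time_deriv_le_of_isMaxOn (exp_pos _) hK hμ hη hη1 hη2
      hrobin hv hv' (hu.hasDerivWithinAt_one τ (Ioo_subset_Ioc_self hτT)) (ha τ hτT)
      (hsuper τ hτT) hpde (mul_div_le_of_mul_inputBound_le_left hE (hinput τ hτt) (hη 0 h₀))
      (mul_div_le_of_mul_inputBound_le_right hE (hinput τ hτt) (hη 1 (right_mem_Icc.2 zero_le_one))
        hrobin)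
      (fun x hx => mul_div_le_of_mul_inputBound_le_source hE (hinput τ hτt) hζ (hf τ hτt) hx
        (hη x (Ioo_subset_Icc_self hx))) hx₀ hmax hlt
  · intro x hx
    simpa using h0 x hx |>.trans' (div_le_div_of_nonneg_right (le_abs_self _) (hη x hx).le)

theorem IsClassicalSolution.exp_mul_abs_div_le (hu : IsClassicalSolution T a b c f u ut ux uxx)
    (ht : t ∈ Ioc 0 T)
    (h0 : ∀ x ∈ Icc (0:ℝ) 1, |u 0 x| / η x ≤ K)
    (hinput : ∀ s ∈ Ioc 0 t, exp (ζ * s) * inputBound u ux f η η' μ lam σ ζ s ≤ K)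
    (hf : ∀ s ∈ Ioc 0 t, BddAbove ((fun x => |f s x| / η x) '' Ioo 0 1)) :
    ∀ x ∈ Icc (0:ℝ) 1, exp (ζ * t) * (|u t x| / η x) ≤ K := by
  intro x hx
  rcases le_total 0 (u t x) with h | h
  · rw [abs_of_nonneg h]
    exact hu.exp_mul_div_le ha hμ hη hη1 hη2 hsuper hrobin hζ ht h0 hinput hf x hx
  · rw [abs_of_nonpos h]
    simpa using hu.neg.exp_mul_div_le ha hμ hη hη1 hη2 hsuper hrobin hζ ht (by simpa using h0)
      (by simpa only [inputBound_neg] using hinput) (by simpa using hf) x hx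

end Solution

theorem cor2_3_case3_general
    (T : ℝ)
    (a b c f : ℝ → ℝ → ℝ)
    (hf_bdd : ∃ M : ℝ, ∀ t ∈ Set.Ioc (0:ℝ) T, ∀ x ∈ Set.Ioo (0:ℝ) 1, |f t x| ≤ M)
    (u ut ux uxx : ℝ → ℝ → ℝ)
    (hu_cont : ContinuousOn (fun p : ℝ × ℝ => u p.1 p.2) (Set.Icc 0 T ×ˢ Set.Icc 0 1))
    (hut : ∀ t ∈ Set.Ioo (0:ℝ) T, ∀ x ∈ Set.Icc (0:ℝ) 1,
      HasDerivAt (fun τ => u τ x) (ut t x) t)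
    (hut_cont : ContinuousOn (fun p : ℝ × ℝ => ut p.1 p.2) (Set.Ioo 0 T ×ˢ Set.Icc 0 1))
    (hux_bd : ∀ t ∈ Set.Ioc (0:ℝ) T,
      HasDerivWithinAt (u t) (ux t 0) (Set.Icc 0 1) 0 ∧
      HasDerivWithinAt (u t) (ux t 1) (Set.Icc 0 1) 1)
    (hC2_pde : ∀ᵐ t ∂(volume.restrict (Set.Ioo 0 T)),
      (∀ x ∈ Set.Ioo (0:ℝ) 1, HasDerivAt (u t) (ux t x) x) ∧
      (∀ x ∈ Set.Ioo (0:ℝ) 1, HasDerivAt (ux t) (uxx t x) x) ∧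
      ContinuousOn (uxx t) (Set.Ioo 0 1) ∧
      (∀ x ∈ Set.Ioo (0:ℝ) 1,
        ut t x = a t x * uxx t x + b t x * ux t x + c t x * u t x + f t x))
    (ha : ∀ t ∈ Set.Ioo (0:ℝ) T, ∀ x ∈ Set.Ioo (0:ℝ) 1, 0 ≤ a t x)
    (μ₁ lam₁ : ℝ) (hμ₁ : 0 < μ₁)
    (σ : ℝ)
    (η η' η'' : ℝ → ℝ)
    (hη_pos : ∀ x ∈ Set.Icc (0:ℝ) 1, 0 < η x)
    (hη1 : ∀ x ∈ Set.Icc (0:ℝ) 1, HasDerivWithinAt η (η' x) (Set.Icc 0 1) x)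
    (hη2 : ∀ x ∈ Set.Icc (0:ℝ) 1, HasDerivWithinAt η' (η'' x) (Set.Icc 0 1) x)
    (hcond : ∀ t ∈ Set.Ioo (0:ℝ) T, ∀ x ∈ Set.Ioo (0:ℝ) 1,
      a t x * η'' x + b t x * η' x + (σ + c t x) * η x ≤ 0)
    (hbc1 : μ₁ * η' 1 + lam₁ * η 1 > 0) :
    ∀ ζ ∈ Set.Ico (0:ℝ) σ, ∀ t ∈ Set.Ioc (0:ℝ) T,
      sSup ((fun x => |u t x| / η x) '' Set.Icc 0 1) ≤
        max (Real.exp (-ζ * t) * sSup ((fun x => |u 0 x| / η x) '' Set.Icc 0 1))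
          (sSup ((fun s =>
              max (max
                  (|u s 0| / η 0)
                  (min (|u s 1| / η 1) (|μ₁ * ux s 1 + lam₁ * u s 1| / (μ₁ * η' 1 + lam₁ * η 1))))
                (sSup ((fun x => |f s x| / η x) '' Set.Ioo 0 1) / (σ - ζ)) *
              Real.exp (-ζ * (t - s))) '' Set.Ioc 0 t)) := by
  intro ζ ⟨hζ0, hζσ⟩ t ⟨ht0, htT⟩
  have hu : IsClassicalSolution T a b c f u ut ux uxx :=
    ⟨hu_cont, hut, hut_cont, fun t ht => (hux_bd t ht).2,
      hC2_pde.mono fun _ h => ⟨h.1, h.2.1, h.2.2.2⟩⟩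
  have hη_cont : ContinuousOn η (Icc 0 1) := fun x hx => (hη1 x hx).continuousWithinAt
  obtain ⟨Mu, hMu⟩ := (isCompact_Icc.prod isCompact_Icc).exists_bound_of_continuousOn hu_cont
  obtain ⟨Cu, hCu⟩ := exists_forall_abs_div_le isCompact_Icc subset_rfl hη_cont hη_pos
    fun s hs x hx => hMu (s, x) ⟨hs, hx⟩
  obtain ⟨M, hM⟩ := hf_bdd
  obtain ⟨Cf, hCf⟩ := exists_forall_abs_div_le isCompact_Icc Ioo_subset_Icc_self hη_cont hη_pos hM
  have hsT : ∀ s ∈ Ioc 0 t, s ∈ Icc 0 T := fun s hs => ⟨hs.1.le, hs.2.trans htT⟩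
  have hinput := exp_mul_le_exp_mul_csSup (G := inputBound u ux f η η' μ₁ lam₁ σ ζ) hζ0
    (fun s _ => inputBound_nonneg (hη_pos 0 (left_mem_Icc.2 zero_le_one)).le) fun s hs =>
      inputBound_le hζσ (hCu s (hsT s hs) 0 (left_mem_Icc.2 zero_le_one))
        (hCu s (hsT s hs) 1 (right_mem_Icc.2 zero_le_one)) (hCf s ⟨hs.1, (hsT s hs).2⟩)
  refine csSup_le ((nonempty_Icc.2 zero_le_one).image _) (forall_mem_image.2 fun x hx => ?_)
  refine le_of_mul_le_mul_left (hu.exp_mul_abs_div_le ha hμ₁ hη_pos hη1 hη2 hcond hbc1 hζσ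
    ⟨ht0, htT⟩ (fun y hy => ?_) (fun s hs => (hinput s hs).trans ?_)
    (fun s hs => ⟨Cf, forall_mem_image.2 (hCf s ⟨hs.1, (hsT s hs).2⟩)⟩) x hx) (exp_pos (ζ * t))
  · have hN : BddAbove ((fun x => |u 0 x| / η x) '' Icc 0 1) :=
      ⟨Cu, forall_mem_image.2 (hCu 0 ⟨le_rfl, ht0.le.trans htT⟩)⟩
    calc |u 0 y| / η y ≤ sSup ((fun x => |u 0 x| / η x) '' Icc 0 1) :=
          le_csSup hN (mem_image_of_mem _ hy)
      _ = exp (ζ * t) * (exp (-ζ * t) * sSup ((fun x => |u 0 x| / η x) '' Icc 0 1)) := by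
          rw [← mul_assoc, ← exp_add]
          simp
      _ ≤ _ := mul_le_mul_of_nonneg_left (le_max_left _ _) (exp_pos _).le
  · exact mul_le_mul_of_nonneg_left (le_max_right _ _) (exp_pos _).le

/-- **Corollary 2.3** (Karafyllis–Krstic), case (2.10): Robin condition at x = 1. -/
theorem cor2_3_case3
    (T : ℝ) (hT : 0 < T)
    (a b c f : ℝ → ℝ → ℝ)
    (hf_bdd : ∃ M : ℝ, ∀ t ∈ Set.Ioc (0:ℝ) T, ∀ x ∈ Set.Ioo (0:ℝ) 1, |f t x| ≤ M)
    (u ut ux uxx : ℝ → ℝ → ℝ)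
    (hu_cont : ContinuousOn (fun p : ℝ × ℝ => u p.1 p.2) (Set.Icc 0 T ×ˢ Set.Icc 0 1))
    (hut : ∀ t ∈ Set.Ioo (0:ℝ) T, ∀ x ∈ Set.Icc (0:ℝ) 1,
      HasDerivAt (fun τ => u τ x) (ut t x) t)
    (hut_cont : ContinuousOn (fun p : ℝ × ℝ => ut p.1 p.2) (Set.Ioo 0 T ×ˢ Set.Icc 0 1))
    (hux_bd : ∀ t ∈ Set.Ioc (0:ℝ) T,
      HasDerivWithinAt (u t) (ux t 0) (Set.Icc 0 1) 0 ∧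
      HasDerivWithinAt (u t) (ux t 1) (Set.Icc 0 1) 1)
    (hC2_pde : ∀ᵐ t ∂(volume.restrict (Set.Ioo 0 T)),
      (∀ x ∈ Set.Ioo (0:ℝ) 1, HasDerivAt (u t) (ux t x) x) ∧
      (∀ x ∈ Set.Ioo (0:ℝ) 1, HasDerivAt (ux t) (uxx t x) x) ∧
      ContinuousOn (uxx t) (Set.Ioo 0 1) ∧
      (∀ x ∈ Set.Ioo (0:ℝ) 1,
        ut t x = a t x * uxx t x + b t x * ux t x + c t x * u t x + f t x))
    (ha : ∀ t ∈ Set.Ioo (0:ℝ) T, ∀ x ∈ Set.Ioo (0:ℝ) 1, 0 ≤ a t x)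
    (μ₁ lam₁ : ℝ) (hμ₁ : 0 < μ₁)
    (σ : ℝ) (hσ : 0 < σ)
    (η η' η'' : ℝ → ℝ)
    (hη_pos : ∀ x ∈ Set.Icc (0:ℝ) 1, 0 < η x)
    (hη1 : ∀ x ∈ Set.Icc (0:ℝ) 1, HasDerivWithinAt η (η' x) (Set.Icc 0 1) x)
    (hη2 : ∀ x ∈ Set.Icc (0:ℝ) 1, HasDerivWithinAt η' (η'' x) (Set.Icc 0 1) x)
    (hη''_cont : ContinuousOn η'' (Set.Icc 0 1))
    (hcond : ∀ t ∈ Set.Ioo (0:ℝ) T, ∀ x ∈ Set.Ioo (0:ℝ) 1,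
      a t x * η'' x + b t x * η' x + (σ + c t x) * η x ≤ 0)
    (hbc1 : μ₁ * η' 1 + lam₁ * η 1 > 0) :
    ∀ ζ ∈ Set.Ico (0:ℝ) σ, ∀ t ∈ Set.Ioc (0:ℝ) T,
      sSup ((fun x => |u t x| / η x) '' Set.Icc 0 1) ≤
        max (Real.exp (-ζ * t) * sSup ((fun x => |u 0 x| / η x) '' Set.Icc 0 1))
          (sSup ((fun s =>
              max (max
                  (|u s 0| / η 0)
                  (min (|u s 1| / η 1) (|μ₁ * ux s 1 + lam₁ * u s 1| / (μ₁ * η' 1 + lam₁ * η 1))))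
                (sSup ((fun x => |f s x| / η x) '' Set.Ioo 0 1) / (σ - ζ)) *
              Real.exp (-ζ * (t - s))) '' Set.Ioc 0 t)) :=
  cor2_3_case3_general T a b c f hf_bdd u ut ux uxx hu_cont hut hut_cont hux_bd hC2_pde ha μ₁ lam₁
    hμ₁ σ η η' η'' hη_pos hη1 hη2 hcond hbc1
end

section
/- Let b > a be real numbers and let u ∈ C⁰([a,b] × [0,1]) be a function for which ∂u/∂t(t,x) exists and is continuous on [a,b] × [0,1]. Then for every t ∈ [a,b) for which the one-sided limit lim_{h→0⁺} ( ‖u[t+h]‖_∞ − ‖u[t]‖_∞ )/h exists, the following equality holds: lim_{h→0⁺} ( ‖u[t+h]‖_∞ − ‖u[t]‖_∞ )/h = lim_{h→0⁺} ( ‖u[t] + h·(∂u/∂t)[t]‖_∞ − ‖u[t]‖_∞ )/h. -/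
/-!
Write `A h` for the profile `u[t] + h·(∂u/∂t)[t]` and `B h` for `u[t+h]`. Since `∂u/∂t` is
uniformly continuous on the compact rectangle, the mean value theorem gives
`‖A h - B h‖_∞ = o(h)` as `h → 0⁺`. Suprema of two functions at uniform distance `c` differ
by at most `c`, so `(‖A h‖_∞ - ‖B h‖_∞) / h → 0`, and the two difference quotients have the
same limit.
-/

open Set Filter Topology

section SupremumDistance

variable {α : Type*} {f g : α → ℝ} {s : Set α} {c : ℝ}

/-- If `g '' s` is unbounded above then so is `f '' s`, and both suprema are the junk
value `0`. -/
theorem sSup_image_le_sSup_image_add (hs : s.Nonempty) (hfg : ∀ x ∈ s, |f x - g x| ≤ c) :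
    sSup (f '' s) ≤ sSup (g '' s) + c := by
  by_cases hg : BddAbove (g '' s)
  · refine csSup_le (hs.image f) (forall_mem_image.2 fun x hx => ?_)
    have := le_csSup hg (mem_image_of_mem g hx)
    linarith [(abs_le.1 (hfg x hx)).2]
  · have hf : ¬BddAbove (f '' s) := by
      rintro ⟨M, hM⟩
      refine hg ⟨M + c, forall_mem_image.2 fun x hx => ?_⟩
      have := hM (mem_image_of_mem f hx)
      linarith [(abs_le.1 (hfg x hx)).1]
    obtain ⟨x, hx⟩ := hs
    rw [Real.sSup_of_not_bddAbove hf, Real.sSup_of_not_bddAbove hg, zero_add]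
    exact (abs_nonneg _).trans (hfg x hx)

theorem abs_sSup_image_sub_sSup_image_le (hs : s.Nonempty) (hfg : ∀ x ∈ s, |f x - g x| ≤ c) :
    |sSup (f '' s) - sSup (g '' s)| ≤ c := by
  have hgf : ∀ x ∈ s, |g x - f x| ≤ c := fun x hx => abs_sub_comm (g x) (f x) ▸ hfg x hx
  rw [abs_sub_le_iff]
  constructor
  · linarith [sSup_image_le_sSup_image_add hs hfg]
  · linarith [sSup_image_le_sSup_image_add hs hgf]

end SupremumDistance

theorem tendsto_sSup_image_sub_sSup_image_div_nhdsGT {α : Type*} {F G : ℝ → α → ℝ}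
    {s : Set α} (hs : s.Nonempty)
    (hFG : ∀ ε > 0, ∀ᶠ h in 𝓝[>] 0, ∀ x ∈ s, |F h x - G h x| ≤ ε * h) :
    Tendsto (fun h => (sSup (F h '' s) - sSup (G h '' s)) / h) (𝓝[>] 0) (𝓝 0) := by
  refine Metric.tendsto_nhds.2 fun ε hε => ?_
  filter_upwards [hFG (ε / 2) (half_pos hε), self_mem_nhdsWithin] with h hFGh (hh : 0 < h)
  rw [Real.dist_0_eq_abs, abs_div, abs_of_pos hh, div_lt_iff₀ hh]
  calc _ ≤ ε / 2 * h := abs_sSup_image_sub_sSup_image_le hs hFGh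
    _ < ε * h := by nlinarith

theorem IsCompact.tendstoUniformlyOn_of_continuousOn_prod {α β E : Type*} [TopologicalSpace α]
    [TopologicalSpace β] [UniformSpace E] {f : α → β → E} {s : Set α} {k : Set β} {q : α}
    (hk : IsCompact k) (hf : ContinuousOn (Function.uncurry f) (s ×ˢ k)) (hq : q ∈ s) :
    TendstoUniformlyOn f (f q) (𝓝[s] q) k := fun _ hu => by
  obtain ⟨v, hv, hvu⟩ := hk.mem_uniformity_of_prod hf hq (symm_le_uniformity hu)
  exact mem_of_superset hv fun p hp x hx => hvu p hp x hx

theorem abs_sub_sub_mul_le_of_hasDerivWithinAt {f f' : ℝ → ℝ} {t h ε : ℝ} (hh : 0 ≤ h)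
    (hf : ∀ s ∈ Icc t (t + h), HasDerivWithinAt f (f' s) (Icc t (t + h)) s)
    (hf' : ∀ s ∈ Icc t (t + h), |f' s - f' t| ≤ ε) :
    |f (t + h) - f t - h * f' t| ≤ ε * h := by
  have hg : ∀ s ∈ Icc t (t + h),
      HasDerivWithinAt (fun τ => f τ - τ * f' t) (f' s - f' t) (Icc t (t + h)) s := fun s hs =>
    (hf s hs).sub (by simpa using (hasDerivWithinAt_id s _).mul_const (f' t))
  have hmvt := (convex_Icc t (t + h)).norm_image_sub_le_of_norm_hasDerivWithin_le hg hf'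
    (left_mem_Icc.2 (by linarith)) (right_mem_Icc.2 (by linarith))
  simp only [Real.norm_eq_abs, add_sub_cancel_left, abs_of_nonneg hh] at hmvt
  calc _ = |f (t + h) - (t + h) * f' t - (f t - t * f' t)| := by ring_nf
    _ ≤ ε * h := hmvt

theorem eventually_abs_sub_sub_mul_le_of_tendstoUniformlyOn {α : Type*} {u ut : ℝ → α → ℝ}
    {K : Set α} {t b : ℝ} (htb : t < b)
    (hu : ∀ s ∈ Icc t b, ∀ x ∈ K, HasDerivWithinAt (u · x) (ut s x) (Icc t b) s)
    (hut : TendstoUniformlyOn ut (ut t) (𝓝[≥] t) K) {ε : ℝ} (hε : 0 < ε) :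
    ∀ᶠ h in 𝓝[>] 0, ∀ x ∈ K, |u (t + h) x - u t x - h * ut t x| ≤ ε * h := by
  obtain ⟨t', htt', hclose⟩ :=
    mem_nhdsGE_iff_exists_Ico_subset.1 (Metric.tendstoUniformlyOn_iff.1 hut ε hε)
  have hδ : 0 < min (t' - t) (b - t) := lt_min (sub_pos.2 htt') (sub_pos.2 htb)
  filter_upwards [Ioo_mem_nhdsGT hδ] with h ⟨hh, hhδ⟩ x hx
  have hsub : Icc t (t + h) ⊆ Icc t b :=
    Icc_subset_Icc_right (by linarith [min_le_right (t' - t) (b - t)])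
  refine abs_sub_sub_mul_le_of_hasDerivWithinAt hh.le
    (fun s hs => (hu s (hsub hs) x hx).mono hsub) fun s hs => ?_
  have hs' : s ∈ Ico t t' := ⟨hs.1, by linarith [hs.2, min_le_left (t' - t) (b - t)]⟩
  rw [abs_sub_comm, ← Real.dist_eq]
  exact (hclose hs' x hx).le

theorem lem4_1_dini_general
    (a b : ℝ) (u ut : ℝ → ℝ → ℝ)
    (hut : ∀ t ∈ Set.Icc a b, ∀ x ∈ Set.Icc (0:ℝ) 1,
      HasDerivWithinAt (fun τ => u τ x) (ut t x) (Set.Icc a b) t)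
    (hut_cont : ContinuousOn (fun p : ℝ × ℝ => ut p.1 p.2) (Set.Icc a b ×ˢ Set.Icc 0 1)) :
    ∀ t ∈ Set.Ico a b, ∀ L : ℝ,
      Tendsto (fun h : ℝ =>
          (sSup ((fun x => |u (t + h) x|) '' Set.Icc 0 1) -
            sSup ((fun x => |u t x|) '' Set.Icc 0 1)) / h)
        (nhdsWithin 0 (Set.Ioi 0)) (nhds L) →
      Tendsto (fun h : ℝ =>
          (sSup ((fun x => |u t x + h * ut t x|) '' Set.Icc 0 1) -
            sSup ((fun x => |u t x|) '' Set.Icc 0 1)) / h)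
        (nhdsWithin 0 (Set.Ioi 0)) (nhds L) := by
  intro t ⟨hat, htb⟩ L hL
  have hsub : Icc t b ⊆ Icc a b := Icc_subset_Icc_left hat
  have hunif : TendstoUniformlyOn ut (ut t) (𝓝[≥] t) (Icc 0 1) := by
    simpa only [nhdsWithin_Icc_eq_nhdsGE htb] using
      isCompact_Icc.tendstoUniformlyOn_of_continuousOn_prod
        (hut_cont.mono (prod_mono hsub subset_rfl)) (left_mem_Icc.2 htb.le)
  have hremainder : Tendsto (fun h : ℝ =>
      (sSup ((fun x => |u t x + h * ut t x|) '' Icc 0 1) -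
        sSup ((fun x => |u (t + h) x|) '' Icc 0 1)) / h) (𝓝[>] 0) (𝓝 0) := by
    refine tendsto_sSup_image_sub_sSup_image_div_nhdsGT (nonempty_Icc.2 zero_le_one)
      fun ε hε => ?_
    filter_upwards [eventually_abs_sub_sub_mul_le_of_tendstoUniformlyOn htb
      (fun s hs x hx => (hut s (hsub hs) x hx).mono hsub) hunif hε] with h hh x hx
    calc _ ≤ |u t x + h * ut t x - u (t + h) x| := abs_abs_sub_abs_le_abs_sub _ _
      _ = |u (t + h) x - u t x - h * ut t x| := by rw [abs_sub_comm]; ring_nf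
      _ ≤ ε * h := hh x hx
  simpa only [add_zero, ← add_div, sub_add_sub_cancel'] using hL.add hremainder

/-- **Lemma 4.1, part 2** (Karafyllis–Krstic): for every `t ∈ [a,b)` at which the
one-sided Dini-type limit of `h ↦ (‖u[t+h]‖_∞ - ‖u[t]‖_∞)/h` exists, it equals the
corresponding limit for `h ↦ (‖u[t] + h·∂u/∂t[t]‖_∞ - ‖u[t]‖_∞)/h`. -/
theorem lem4_1_dini
    (a b : ℝ) (hab : a < b) (u ut : ℝ → ℝ → ℝ)
    (hu_cont : ContinuousOn (fun p : ℝ × ℝ => u p.1 p.2) (Set.Icc a b ×ˢ Set.Icc 0 1))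
    (hut : ∀ t ∈ Set.Icc a b, ∀ x ∈ Set.Icc (0:ℝ) 1,
      HasDerivWithinAt (fun τ => u τ x) (ut t x) (Set.Icc a b) t)
    (hut_cont : ContinuousOn (fun p : ℝ × ℝ => ut p.1 p.2) (Set.Icc a b ×ˢ Set.Icc 0 1)) :
    ∀ t ∈ Set.Ico a b, ∀ L : ℝ,
      Tendsto (fun h : ℝ =>
          (sSup ((fun x => |u (t + h) x|) '' Set.Icc 0 1) -
            sSup ((fun x => |u t x|) '' Set.Icc 0 1)) / h)
        (nhdsWithin 0 (Set.Ioi 0)) (nhds L) →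
      Tendsto (fun h : ℝ =>
          (sSup ((fun x => |u t x + h * ut t x|) '' Set.Icc 0 1) -
            sSup ((fun x => |u t x|) '' Set.Icc 0 1)) / h)
        (nhdsWithin 0 (Set.Ioi 0)) (nhds L) :=
  lem4_1_dini_general a b u ut hut hut_cont
end

section
/- Let u, w ∈ C⁰([0,1]) with ‖u‖_∞ > 0, let ε ∈ (0, ‖u‖_∞), and define I_ε := { y ∈ [0,1] : |u(y)| ≥ ‖u‖_∞ − ε }. If the one-sided limit L := lim_{h→0⁺} ( ‖u + h·w‖_∞ − ‖u‖_∞ )/h exists, then L ≤ max_{x∈I_ε} ( sgn(u(x))·w(x) ). -/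
open Set Filter

private lemma abs_add_eq_of_abs_lt {a b : ℝ} (h : |b| < |a|) :
    |a + b| = |a| + Real.sign a * b := by
  rcases lt_trichotomy a 0 with ha | ha | ha
  · rw [abs_of_neg ha, abs_lt] at h
    rw [Real.sign_of_neg ha, abs_of_neg ha, abs_of_neg (by linarith)]
    ring
  · subst ha; simp at h; linarith [abs_nonneg b, h]
  · rw [abs_of_pos ha, abs_lt] at h
    rw [Real.sign_of_pos ha, abs_of_pos ha, abs_of_pos (by linarith)]
    ring

private lemma abs_sign_le (a : ℝ) : |Real.sign a| ≤ 1 := by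
  rcases lt_trichotomy a 0 with ha | ha | ha <;>
    simp [Real.sign_of_neg, Real.sign_of_pos, ha]

/-- **Inequality (4.8)** in Karafyllis–Krstic: for `u, w ∈ C⁰([0,1])` with `‖u‖_∞ > 0`
and `ε ∈ (0, ‖u‖_∞)`, if the one-sided limit `L = lim_{h→0⁺} (‖u + h·w‖_∞ - ‖u‖_∞)/h`
exists, then `L ≤ max_{x ∈ I_ε} sgn(u(x))·w(x)` with
`I_ε = {y ∈ [0,1] : |u(y)| ≥ ‖u‖_∞ - ε}`. -/
theorem ineq4_8
    (u w : ℝ → ℝ)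
    (hu : ContinuousOn u (Set.Icc 0 1)) (hw : ContinuousOn w (Set.Icc 0 1))
    (hpos : 0 < sSup ((fun x => |u x|) '' Set.Icc 0 1))
    (ε : ℝ) (hε : ε ∈ Set.Ioo 0 (sSup ((fun x => |u x|) '' Set.Icc 0 1)))
    (L : ℝ)
    (hL : Tendsto (fun h : ℝ =>
        (sSup ((fun x => |u x + h * w x|) '' Set.Icc 0 1) -
          sSup ((fun x => |u x|) '' Set.Icc 0 1)) / h)
      (nhdsWithin 0 (Set.Ioi 0)) (nhds L)) :
    L ≤ sSup ((fun x => Real.sign (u x) * w x) ''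
      {y ∈ Set.Icc (0:ℝ) 1 |
        sSup ((fun x => |u x|) '' Set.Icc 0 1) - ε ≤ |u y|}) := by
  set M := sSup ((fun x => |u x|) '' Set.Icc 0 1) with hMdef
  obtain ⟨hε0, hεM⟩ := hε
  have hne : (Set.Icc (0:ℝ) 1).Nonempty := ⟨0, by norm_num⟩
  -- bound on |w|
  obtain ⟨xw, hxw, hxwmax⟩ := isCompact_Icc.exists_isMaxOn hne hw.abs
  set C := |w xw| with hCdef
  have hC0 : 0 ≤ C := abs_nonneg _
  have hCb : ∀ y ∈ Set.Icc (0:ℝ) 1, |w y| ≤ C := fun y hy => hxwmax hy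
  -- maximizer of |u|
  obtain ⟨x0, hx0, hx0max⟩ := isCompact_Icc.exists_isMaxOn hne hu.abs
  have hMeq : M = |u x0| := by
    apply le_antisymm
    · exact csSup_le (hne.image _) (by rintro z ⟨y, hy, rfl⟩; exact hx0max hy)
    · exact le_csSup (isCompact_Icc.image_of_continuousOn hu.abs).bddAbove
        ⟨x0, hx0, rfl⟩
  have hMub : ∀ y ∈ Set.Icc (0:ℝ) 1, |u y| ≤ M := by
    intro y hy; rw [hMeq]; exact hx0max hy
  -- the target sup
  set T := sSup ((fun x => Real.sign (u x) * w x) ''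
      {y ∈ Set.Icc (0:ℝ) 1 | M - ε ≤ |u y|}) with hTdef
  have hTbdd : BddAbove ((fun x => Real.sign (u x) * w x) ''
      {y ∈ Set.Icc (0:ℝ) 1 | M - ε ≤ |u y|}) := by
    refine ⟨C, ?_⟩
    rintro z ⟨y, ⟨hy, _⟩, rfl⟩
    calc Real.sign (u y) * w y ≤ |Real.sign (u y) * w y| := le_abs_self _
    _ = |Real.sign (u y)| * |w y| := abs_mul _ _
    _ ≤ 1 * C := mul_le_mul (abs_sign_le _) (hCb y hy) (abs_nonneg _) one_pos.le
    _ = C := one_mul C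
  set δ := min (ε / (2 * (C + 1))) ((M - ε) / (C + 1)) with hδdef
  have hδpos : 0 < δ := by
    apply lt_min
    · positivity
    · exact div_pos (by linarith) (by linarith)
  refine le_of_tendsto hL ?_
  filter_upwards [Ioo_mem_nhdsGT_of_mem (show (0:ℝ) ∈ Set.Ico 0 δ from ⟨le_refl _, hδpos⟩)]
    with h hh
  obtain ⟨hh0, hhδ⟩ := hh
  have hhC : h * C < ε / 2 := by
    have := lt_of_lt_of_le hhδ (min_le_left _ _)
    have h1 : h * (2 * (C + 1)) < ε := by
      rw [← lt_div_iff₀ (by positivity)]; exact this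
    nlinarith
  have hhC2 : h * C < M - ε := by
    have := lt_of_lt_of_le hhδ (min_le_right _ _)
    have h1 : h * (C + 1) < M - ε := by
      rw [← lt_div_iff₀ (by positivity)]; exact this
    nlinarith
  -- maximizer of |u + h w|
  have hcont : ContinuousOn (fun x => |u x + h * w x|) (Set.Icc 0 1) :=
    (hu.add (continuousOn_const.mul hw)).abs
  obtain ⟨xh, hxh, hxhmax⟩ := isCompact_Icc.exists_isMaxOn hne hcont
  set N := sSup ((fun x => |u x + h * w x|) '' Set.Icc 0 1) with hNdef
  have hNeq : N = |u xh + h * w xh| := by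
    apply le_antisymm
    · exact csSup_le (hne.image _) (by rintro z ⟨y, hy, rfl⟩; exact hxhmax hy)
    · exact le_csSup (isCompact_Icc.image_of_continuousOn hcont).bddAbove
        ⟨xh, hxh, rfl⟩
  -- N ≥ M - hC
  have hNlb : M - h * C ≤ N := by
    have h1 : |u x0 + h * w x0| ≤ N := hNeq ▸ hxhmax hx0
    have h2 : |u x0| - |h * w x0| ≤ |u x0 + h * w x0| := by
      have h4 : |u x0| ≤ |u x0 + h * w x0| + |h * w x0| := by
        have h5 := abs_add_le (u x0 + h * w x0) (-(h * w x0))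
        simpa using h5
      linarith
    have h3 : |h * w x0| ≤ h * C := by
      rw [abs_mul, abs_of_pos hh0]
      exact mul_le_mul_of_nonneg_left (hCb x0 hx0) hh0.le
    rw [hMeq]; linarith
  -- |u xh| ≥ M - 2 h C
  have hwxh : |h * w xh| ≤ h * C := by
    rw [abs_mul, abs_of_pos hh0]
    exact mul_le_mul_of_nonneg_left (hCb xh hxh) hh0.le
  have huxh : M - 2 * (h * C) ≤ |u xh| := by
    have h2 : |u xh + h * w xh| - |h * w xh| ≤ |u xh| := by
      have h5 := abs_add_le (u xh) (h * w xh)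
      linarith
    rw [← hNeq] at h2
    linarith
  have huxhε : M - ε ≤ |u xh| := by linarith
  have hsign : |h * w xh| < |u xh| := lt_of_le_of_lt hwxh (by linarith)
  have hsplit : |u xh + h * w xh| = |u xh| + Real.sign (u xh) * (h * w xh) :=
    abs_add_eq_of_abs_lt hsign
  have hxhT : Real.sign (u xh) * w xh ≤ T :=
    le_csSup hTbdd ⟨xh, ⟨hxh, huxhε⟩, rfl⟩
  -- conclude
  rw [div_le_iff₀ hh0]
  have hNM : N - M ≤ h * (Real.sign (u xh) * w xh) := by
    rw [hNeq, hsplit]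
    have := hMub xh hxh
    ring_nf
    nlinarith [hMub xh hxh]
  calc N - M ≤ h * (Real.sign (u xh) * w xh) := hNM
  _ ≤ h * T := mul_le_mul_of_nonneg_left hxhT hh0.le
  _ = T * h := mul_comm _ _
end
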